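/- arXiv:2008.10260 — 10 statements merged into one kernel-verified Lean document; each statement's English description precedes it below -/
import Mathlib

section
/- Let X be a graph and κ an infinite cardinal. Then col(X) ≤ κ if and only if there is a function f : V(X) → [V(X)]^{<κ} such that whenever x and y are adjacent, either x ∈ f(y) or y ∈ f(x). -/
/-!
Forward direction: for a witnessing well-order, let `f x` be the set of earlier neighbours of `x`.

Backward direction: well-order `V` and send each vertex `x` to its least root, the least `v` from
which `x` is reachable by repeatedly passing from `y` to a member of `f y`. A reachable set is a
countable union of sets of size `≤ κ`, so every fibre of the least root has size `≤ κ`. Order `V`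
lexicographically by least root and then by an embedding of the fibre into `κ.ord.ToType`. If `y`
is a neighbour of `x` with smaller least root, then `y ∈ f x`: otherwise `x ∈ f y`, so `x` would be
reachable from the least root of `y`. The earlier neighbours of `x` with the same least root are
fewer than `κ` because they embed into an initial segment of `κ.ord.ToType`.
-/

open Cardinal

/-- A good coloring of a graph: adjacent vertices get distinct colors. -/
def IsGoodColoring {V : Type} {C : Type} (G : SimpleGraph V) (f : V → C) : Prop :=
  ∀ ⦃x y : V⦄, G.Adj x y → f x ≠ f y

/-- `G` is `κ`-list-colorable: every assignment of lists of size `κ`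
admits a good coloring choosing from the lists. -/
def ListColorable {V : Type} (G : SimpleGraph V) (κ : Cardinal) : Prop :=
  ∀ (C : Type) (F : V → Set C), (∀ x, #(F x) = κ) →
    ∃ f : V → C, IsGoodColoring G f ∧ ∀ x, f x ∈ F x

/-- The list-chromatic number of `G`: the least cardinal `κ` such that every
`κ`-assignment admits a good coloring from the lists. -/
noncomputable def listChromatic {V : Type} (G : SimpleGraph V) : Cardinal :=
  sInf {κ : Cardinal | ListColorable G κ}

/-- The coloring number of `G`: the least cardinal `κ` such that there is a
well-ordering of the vertices in which every vertex has fewer than `κ`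
neighbors preceding it. -/
noncomputable def colNum {V : Type} (G : SimpleGraph V) : Cardinal :=
  sInf {κ : Cardinal | ∃ r : V → V → Prop, IsWellOrder V r ∧
    ∀ x : V, #{y : V | G.Adj x y ∧ r y x} < κ}

section Reachable

variable {V : Type*} (f : V → Set V)

def reachableSet (v : V) : Set V :=
  {x | Relation.ReflTransGen (fun y z => z ∈ f y) v x}

lemma mem_reachableSet_self (v : V) : v ∈ reachableSet f v :=
  Relation.ReflTransGen.refl

lemma subset_reachableSet {v y : V} (hy : y ∈ reachableSet f v) : f y ⊆ reachableSet f v :=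
  fun _ hz => hy.tail hz

def reachableWithin (v : V) : ℕ → Set V
  | 0 => {v}
  | n + 1 => ⋃ y ∈ reachableWithin v n, f y

lemma reachableSet_subset_iUnion_reachableWithin (v : V) :
    reachableSet f v ⊆ ⋃ n, reachableWithin f v n := by
  intro x hx
  induction hx with
  | refl => exact Set.mem_iUnion.mpr ⟨0, rfl⟩
  | tail _ hz ih =>
    obtain ⟨n, hn⟩ := Set.mem_iUnion.mp ih
    exact Set.mem_iUnion.mpr ⟨n + 1, Set.mem_biUnion hn hz⟩

variable {f} {κ : Cardinal} (hκ : ℵ₀ ≤ κ) (hf : ∀ y, #(f y) ≤ κ)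
include hκ hf

lemma mk_biUnion_le_of_mk_le {S : Set V} (hS : #S ≤ κ) : #(⋃ y ∈ S, f y) ≤ κ :=
  calc #(⋃ y ∈ S, f y) ≤ #S * ⨆ y : S, #(f y) := mk_biUnion_le f S
    _ ≤ κ * κ := mul_le_mul' hS (ciSup_le' fun y => hf y)
    _ = κ := mul_eq_self hκ

lemma mk_reachableWithin_le (v : V) (n : ℕ) : #(reachableWithin f v n) ≤ κ := by
  induction n with
  | zero => simpa [reachableWithin] using one_le_aleph0.trans hκ
  | succ n ih => exact mk_biUnion_le_of_mk_le hκ hf ih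

lemma mk_reachableSet_le (v : V) : #(reachableSet f v) ≤ κ := by
  have hunion := mk_iUnion_le_lift (reachableWithin f v)
  simp only [lift_uzero, mk_nat, lift_aleph0] at hunion
  calc #(reachableSet f v) ≤ #(⋃ n, reachableWithin f v n) :=
        mk_le_mk_of_subset (reachableSet_subset_iUnion_reachableWithin f v)
    _ ≤ ℵ₀ * ⨆ n, #(reachableWithin f v n) := hunion
    _ ≤ κ * κ := mul_le_mul' hκ (ciSup_le' (mk_reachableWithin_le hκ hf v))
    _ = κ := mul_eq_self hκ

end Reachable

section LeastRoot

variable {V : Type*} [LinearOrder V] [WellFoundedLT V] (f : V → Set V)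

noncomputable def leastRoot (x : V) : V :=
  wellFounded_lt.min {v | x ∈ reachableSet f v} ⟨x, mem_reachableSet_self f x⟩

lemma mem_reachableSet_leastRoot (x : V) : x ∈ reachableSet f (leastRoot f x) :=
  wellFounded_lt.min_mem {v | x ∈ reachableSet f v} _

lemma leastRoot_le_of_mem {x y : V} (h : x ∈ f y) : leastRoot f x ≤ leastRoot f y :=
  wellFounded_lt.min_le (s := {v | x ∈ reachableSet f v})
    (subset_reachableSet f (mem_reachableSet_leastRoot f y) h)

lemma mk_leastRoot_preimage_le {κ : Cardinal} (hκ : ℵ₀ ≤ κ) (hf : ∀ y, #(f y) ≤ κ) (v : V) :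
    #(leastRoot f ⁻¹' {v}) ≤ κ := by
  refine (mk_le_mk_of_subset ?_).trans (mk_reachableSet_le hκ hf v)
  rintro x rfl
  exact mem_reachableSet_leastRoot f x

end LeastRoot

theorem exists_isWellOrder_of_mk_preimage_le {V α : Type*} [LinearOrder α] [WellFoundedLT α]
    (p : V → α) {κ : Cardinal} (hp : ∀ a, #(p ⁻¹' {a}) ≤ κ) :
    ∃ r : V → V → Prop, IsWellOrder V r ∧ (∀ x y, r y x → p y ≤ p x) ∧
      ∀ x, #{y | r y x ∧ p y = p x} < κ := by
  have e (a : α) : {x // p x = a} ↪ κ.ord.ToType :=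
    Classical.choice ((le_def _ _).mp ((hp a).trans_eq (mk_ord_toType κ).symm))
  set ι : V → κ.ord.ToType := fun x => e (p x) ⟨x, rfl⟩
  set θ : V → α ×ₗ κ.ord.ToType := fun x => toLex (p x, ι x)
  have hθ : Function.Injective θ := by
    have hsigma : Function.Injective fun s : Σ a, {x // p x = a} => toLex (s.1, e s.1 s.2) := by
      rintro ⟨a, x⟩ ⟨b, y⟩ h
      simp only [toLex_inj, Prod.mk.injEq] at h
      obtain ⟨rfl, h⟩ := h
      rw [(e a).injective h]
    exact hsigma.comp (Equiv.sigmaFiberEquiv p).symm.injective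
  refine ⟨θ ⁻¹'o (· < ·), (RelEmbedding.preimage ⟨θ, hθ⟩ (· < ·)).isWellOrder,
    fun x y h => (Prod.Lex.toLex_lt_toLex'.mp h).1, fun x => ?_⟩
  have hinj : Set.InjOn ι {y | θ y < θ x ∧ p y = p x} := fun y hy z hz h =>
    hθ (by simp only [θ, hy.2, hz.2, h])
  calc #{y | θ y < θ x ∧ p y = p x}
      = #(ι '' {y | θ y < θ x ∧ p y = p x}) := (mk_image_eq_of_injOn _ _ hinj).symm
    _ ≤ #(Set.Iio (ι x)) := by
        refine mk_le_mk_of_subset ?_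
        rintro _ ⟨y, ⟨hyx, hpy⟩, rfl⟩
        exact (Prod.Lex.toLex_lt_toLex'.mp hyx).2 hpy
    _ < κ := by simpa using mk_Iio_lt (ι x)

section ColNum

variable {V : Type} (G : SimpleGraph V)

lemma exists_isWellOrder_mk_lt_colNum :
    ∃ r : V → V → Prop, IsWellOrder V r ∧ ∀ x, #{y | G.Adj x y ∧ r y x} < colNum G :=
  csInf_mem (s := {κ | ∃ r : V → V → Prop, IsWellOrder V r ∧ ∀ x, #{y | G.Adj x y ∧ r y x} < κ})
    ⟨Order.succ #V, WellOrderingRel, inferInstance,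
      fun _ => (mk_set_le _).trans_lt (Order.lt_succ _)⟩

lemma exists_adj_cover_of_colNum_le {κ : Cardinal} (hκ : colNum G ≤ κ) :
    ∃ f : V → Set V, (∀ x, #(f x) < κ) ∧ ∀ x y, G.Adj x y → x ∈ f y ∨ y ∈ f x := by
  obtain ⟨r, hr, hlt⟩ := exists_isWellOrder_mk_lt_colNum G
  refine ⟨fun x => {y | G.Adj x y ∧ r y x}, fun x => (hlt x).trans_le hκ, fun x y hxy => ?_⟩
  rcases trichotomous_of r x y with h | rfl | h
  · exact Or.inl ⟨hxy.symm, h⟩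
  · exact (G.irrefl hxy).elim
  · exact Or.inr ⟨hxy, h⟩

lemma colNum_le_of_adj_cover {κ : Cardinal} (hκ : ℵ₀ ≤ κ) (f : V → Set V) (hf : ∀ x, #(f x) < κ)
    (hcover : ∀ x y, G.Adj x y → x ∈ f y ∨ y ∈ f x) : colNum G ≤ κ := by
  obtain ⟨_, _⟩ := exists_wellFoundedLT V
  obtain ⟨r, hr, hmono, hfiber⟩ :=
    exists_isWellOrder_of_mk_preimage_le (leastRoot f) (mk_leastRoot_preimage_le f hκ (hf · |>.le))
  refine csInf_le' ⟨r, hr, fun x => ?_⟩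
  have hsub : {y | G.Adj x y ∧ r y x} ⊆ f x ∪ {y | r y x ∧ leastRoot f y = leastRoot f x} := by
    rintro y ⟨hxy, hyx⟩
    rcases (hmono x y hyx).lt_or_eq with hlt | heq
    · exact Or.inl ((hcover x y hxy).resolve_left fun hx => (leastRoot_le_of_mem f hx).not_gt hlt)
    · exact Or.inr ⟨hyx, heq⟩
  calc #{y | G.Adj x y ∧ r y x}
      ≤ #(f x ∪ {y | r y x ∧ leastRoot f y = leastRoot f x} : Set V) := mk_le_mk_of_subset hsub
    _ ≤ #(f x) + #{y | r y x ∧ leastRoot f y = leastRoot f x} := mk_union_le _ _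
    _ < κ := add_lt_of_lt hκ (hf x) (hfiber x)

end ColNum

/-- Erdős–Hajnal criterion: `col(X) ≤ κ` iff there is `f : V → [V]^{<κ}` such
that adjacent `x, y` satisfy `x ∈ f y` or `y ∈ f x`. -/
theorem colNum_le_iff {V : Type} (G : SimpleGraph V) (κ : Cardinal) (hκ : ℵ₀ ≤ κ) :
    colNum G ≤ κ ↔
      ∃ f : V → Set V, (∀ x, #(f x) < κ) ∧
        ∀ x y, G.Adj x y → x ∈ f y ∨ y ∈ f x :=
  ⟨exists_adj_cover_of_colNum_le G, fun ⟨f, hf, hcover⟩ => colNum_le_of_adj_cover G hκ f hf hcover⟩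
end

section
/- The complete bipartite graph K_{ω, 2^ω} (bipartition classes of sizes ℵ₀ and 2^{ℵ₀}) has uncountable list-chromatic number. -/
open Cardinal

section

variable {A B C : Type}

lemma isGoodColoring_completeBipartiteGraph_iff {f : A ⊕ B → C} :
    IsGoodColoring (completeBipartiteGraph A B) f ↔ ∀ a b, f (.inl a) ≠ f (.inr b) := by
  refine ⟨fun hf a b => hf (by simp), ?_⟩
  rintro hf (a | b) (a' | b') hadj
  · simp at hadj
  · exact hf a b'
  · exact (hf a' b).symm
  · simp at hadj

/-- Color `A` arbitrarily; each list on `B` is larger than the set of colors used on `A`. -/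
lemma listColorable_completeBipartiteGraph_of_mk_lt {κ : Cardinal} (hA : #A < κ) :
    ListColorable (completeBipartiteGraph A B) κ := by
  intro C F hF
  have hne : ∀ x, (F x).Nonempty := fun x =>
    Set.nonempty_coe_sort.1 <| mk_ne_zero_iff.1 <| (hF x).symm ▸ (zero_le.trans_lt hA).ne'
  choose g hg using fun a => hne (.inl a)
  have hfree : ∀ b, ∃ c ∈ F (.inr b), c ∉ Set.range g := fun b =>
    Set.not_subset.1 fun hsub => (hF (.inr b) ▸ mk_le_mk_of_subset hsub).not_gt <|
      mk_range_le.trans_lt hA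
  choose g' hg'F hg'g using hfree
  refine ⟨Sum.elim g g', isGoodColoring_completeBipartiteGraph_iff.2 fun a b h =>
    hg'g b ⟨a, h⟩, ?_⟩
  rintro (a | b)
  exacts [hg a, hg'F b]

/-- Index `κ` vertices of `A` by `T` and let the vertices of `B` run over all maps `h : T → T`.
The vertex `aₜ` gets the colors `{aₜ} × T`, the vertex `b_h` the graph `{(aₜ, h t)}` of its map.
A coloring of `A` from these lists is itself the graph of some `h`, which leaves no color
for `b_h`. -/
lemma not_listColorable_completeBipartiteGraph {κ : Cardinal} (hA : κ ≤ #A) (hB : κ ^ κ ≤ #B) :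
    ¬ ListColorable (completeBipartiteGraph A B) κ := by
  intro hcol
  set T := κ.out
  have hT : #T = κ := mk_out κ
  obtain ⟨e⟩ : Nonempty (T ↪ A) := (le_def _ _).1 (hT ▸ hA)
  obtain ⟨φ⟩ : Nonempty ((T → T) ↪ B) := (le_def _ _).1 (by simpa [hT] using hB)
  have : Nonempty (T → T) := ⟨id⟩
  set σ : B → T → T := Function.invFun φ
  let F : A ⊕ B → Set (A × T) :=
    Sum.elim (fun a => Set.range fun s => (a, s)) (fun b => Set.range fun t => (e t, σ b t))
  have hF : ∀ x, #(F x) = κ := by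
    rintro (a | b)
    · exact (mk_range_eq _ fun s s' h => (Prod.ext_iff.1 h).2).trans hT
    · exact (mk_range_eq _ fun t t' h => e.injective (Prod.ext_iff.1 h).1).trans hT
  obtain ⟨f, hgood, hmem⟩ := hcol (A × T) F hF
  choose h hh using fun t => hmem (.inl (e t))
  obtain ⟨b, hb⟩ := Function.invFun_surjective φ.injective h
  obtain ⟨t, ht⟩ := hmem (.inr b)
  refine isGoodColoring_completeBipartiteGraph_iff.1 hgood (e t) b ?_
  rw [← hh t, ← ht]
  exact congrArg (Prod.mk (e t)) (congrFun hb t).symm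

lemma power_self_le_two_power_aleph0 {κ : Cardinal} (hκ : κ ≤ ℵ₀) : κ ^ κ ≤ 2 ^ ℵ₀ := by
  rcases eq_or_ne κ 0 with rfl | hκ0
  · exact (power_zero (a := 0)).trans_le <|
      Cardinal.one_le_iff_ne_zero.2 (power_ne_zero _ two_ne_zero)
  calc κ ^ κ ≤ κ ^ ℵ₀ := power_le_power_left hκ0 hκ
    _ ≤ ℵ₀ ^ ℵ₀ := power_le_power_right hκ
    _ = 2 ^ ℵ₀ := power_self_eq le_rfl

end

/-- The complete bipartite graph `K_{ω, 2^ω}` has uncountable list-chromatic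
number. -/
theorem listChromatic_completeBipartite_uncountable (A B : Type)
    (hA : #A = ℵ₀) (hB : #B = 2 ^ ℵ₀) :
    ℵ₀ < listChromatic (completeBipartiteGraph A B) := by
  have hcol : ListColorable (completeBipartiteGraph A B) (Order.succ ℵ₀) :=
    listColorable_completeBipartiteGraph_of_mk_lt (hA ▸ Order.lt_succ ℵ₀)
  have hcountable : ∀ κ ≤ ℵ₀, ¬ ListColorable (completeBipartiteGraph A B) κ := fun κ hκ =>
    not_listColorable_completeBipartiteGraph (hA ▸ hκ) (hB ▸ power_self_le_two_power_aleph0 hκ)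
  refine (Order.lt_succ ℵ₀).trans_le <| le_csInf ⟨_, hcol⟩ fun κ hκ => ?_
  exact Order.succ_le_of_lt <| not_le.1 fun hle => hcountable κ hle hκ
end

section
/- If λ < 2^ω, then the complete bipartite graph K_{ω, λ} has countable list-chromatic number. -/
/-!
Label the nodes of the binary tree `2^{<ω}` injectively by colours, a node of level `n` by a
colour from the list of the `n`-th vertex of the countable side. Two distinct branches then
share only finitely many labels, so an infinite list of the other side lies inside the labels
of at most one branch. There are `2^ℵ₀` branches but fewer lists, so some branch contains no
list: colour the countable side along that branch, and every other vertex by a colour of its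
list that is off the branch.
-/

open Cardinal

open Function Set

universe u

theorem exists_injective_forall_mem_of_infinite {C : Type*} (S : ℕ → Set C)
    (hS : ∀ n, (S n).Infinite) : ∃ e : ℕ → C, Injective e ∧ ∀ n, e n ∈ S n := by
  classical
  choose pick hpick using fun (s : Finset C) n => ((hS n).sdiff s.finite_toSet).nonempty
  let used : ℕ → Finset C := fun n => Nat.rec ∅ (fun k s => insert (pick s k) s) n
  have mem_used : ∀ {m n}, m < n → pick (used m) m ∈ used n := by
    intro m n hmn
    induction n with
    | zero => omega
    | succ k ih =>
      rcases Nat.lt_succ_iff_lt_or_eq.mp hmn with hlt | rfl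
      · exact Finset.mem_insert_of_mem (ih hlt)
      · exact Finset.mem_insert_self _ _
  refine ⟨fun n => pick (used n) n, Injective.of_lt_imp_ne fun m n hmn heq => ?_,
    fun n => (hpick _ n).1⟩
  exact (hpick (used n) n).2 (heq ▸ mem_used hmn)

def treeBranch {C : Type*} (E : (Σ n, Fin n → Bool) → C) (r : ℕ → Bool) (n : ℕ) : C :=
  E ⟨n, fun i => r i⟩

theorem finite_range_treeBranch_inter {C : Type*} {E : (Σ n, Fin n → Bool) → C}
    (hE : Injective E) {r r' : ℕ → Bool} (hne : r ≠ r') :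
    (range (treeBranch E r) ∩ range (treeBranch E r')).Finite := by
  obtain ⟨N, hN⟩ := Function.ne_iff.mp hne
  refine ((finite_Iic N).image (treeBranch E r)).subset ?_
  rintro _ ⟨⟨n, rfl⟩, ⟨m, hm⟩⟩
  obtain ⟨rfl, hnode⟩ := Sigma.mk.inj_iff.mp (hE hm)
  refine ⟨m, mem_Iic.mpr (not_lt.mp fun hNm => hN ?_), rfl⟩
  exact (congrFun (eq_of_heq hnode) ⟨N, hNm⟩).symm

theorem exists_forall_not_subset_of_pairwise_finite_inter {X B : Type u} {C : Type*}
    (R : X → Set C) (hR : Pairwise fun x y => (R x ∩ R y).Finite)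
    (T : B → Set C) (hT : ∀ b, (T b).Infinite) (hcard : #B < #X) :
    ∃ x, ∀ b, ¬ T b ⊆ R x := by
  by_contra! h
  choose f hf using h
  have hf_inj : Injective f := fun x y hxy => by
    by_contra hne
    exact hT (f x) ((hR hne).subset (subset_inter (hf x) (hxy ▸ hf y)))
  exact (mk_le_of_injective hf_inj).not_gt hcard

theorem exists_forall_mem_forall_not_subset_range {B : Type} {C : Type*} (S : ℕ → Set C)
    (hS : ∀ n, (S n).Infinite) (T : B → Set C) (hT : ∀ b, (T b).Infinite)
    (hB : #B < 2 ^ ℵ₀) : ∃ g : ℕ → C, (∀ n, g n ∈ S n) ∧ ∀ b, ¬ T b ⊆ range g := by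
  obtain ⟨τ⟩ := nonempty_equiv_of_countable (α := ℕ) (β := Σ n, Fin n → Bool)
  obtain ⟨e, he, heS⟩ := exists_injective_forall_mem_of_infinite (fun k => S (τ k).1)
    fun _ => hS _
  set E := e ∘ τ.symm
  have hE : ∀ σ, E σ ∈ S σ.1 := fun σ => by simpa [E] using heS (τ.symm σ)
  obtain ⟨r, hr⟩ := exists_forall_not_subset_of_pairwise_finite_inter
    (fun r => range (treeBranch E r))
    (fun r r' hne => finite_range_treeBranch_inter (he.comp τ.symm.injective) hne) T hT
    (by simpa using hB)
  exact ⟨treeBranch E r, fun n => hE ⟨n, _⟩, hr⟩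

theorem exists_listColoring_completeBipartiteGraph {A B C : Type} (F : A ⊕ B → Set C)
    (g : A → C) (hg : ∀ a, g a ∈ F (.inl a)) (hF : ∀ b, ¬ F (.inr b) ⊆ range g) :
    ∃ f, IsGoodColoring (completeBipartiteGraph A B) f ∧ ∀ x, f x ∈ F x := by
  choose h hhF hhg using fun b => not_subset.mp (hF b)
  refine ⟨Sum.elim g h, ?_, Sum.rec hg hhF⟩
  rintro (a | b) (a' | b') hadj
  · simp at hadj
  · exact fun heq => hhg b' ⟨a, heq⟩
  · exact fun heq => hhg b ⟨a', heq.symm⟩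
  · simp at hadj

theorem listColorable_completeBipartiteGraph_aleph0 {A B : Type} (hA : #A = ℵ₀)
    (hB : #B < 2 ^ ℵ₀) : ListColorable (completeBipartiteGraph A B) ℵ₀ := by
  intro C F hF
  have hF_inf : ∀ x, (F x).Infinite := fun x =>
    infinite_coe_iff.mp (infinite_iff.mpr (hF x).ge)
  obtain ⟨eA⟩ := Cardinal.eq.mp (hA.trans mk_nat.symm)
  obtain ⟨g, hgA, hgB⟩ := exists_forall_mem_forall_not_subset_range
    (fun n => F (.inl (eA.symm n))) (fun _ => hF_inf _) (fun b => F (.inr b))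
    (fun _ => hF_inf _) hB
  refine exists_listColoring_completeBipartiteGraph F (g ∘ eA)
    (fun a => by simpa using hgA (eA a)) ?_
  rwa [eA.surjective.range_comp]

/-- If `λ < 2^ω`, then the complete bipartite graph `K_{ω, λ}` has countable
list-chromatic number. -/
theorem listChromatic_completeBipartite_countable (lam : Cardinal)
    (hlam : lam < 2 ^ ℵ₀) (A B : Type) (hA : #A = ℵ₀) (hB : #B = lam) :
    listChromatic (completeBipartiteGraph A B) ≤ ℵ₀ :=
  csInf_le' (listColorable_completeBipartiteGraph_aleph0 hA (hB ▸ hlam))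
end

section
/- Let X = (κ, E) be a graph on a regular uncountable cardinal κ and λ < κ an infinite cardinal such that every subgraph of X of size < κ has coloring number ≤ λ. If the set T = {α < κ : there exists β ≥ α with |E^β ∩ α| ≥ λ} is stationary in κ, then col(X) > λ. -/
open Cardinal

/-- A club (closed unbounded) subset of a (well-)ordered type. -/
def IsClubSet {V : Type*} [LinearOrder V] (C : Set V) : Prop :=
  (∀ a : V, ∃ b ∈ C, a < b) ∧
  ∀ a : V, (∃ b, b < a) → (∀ b < a, ∃ c ∈ C, b < c ∧ c < a) → a ∈ C

/-- A stationary subset: one meeting every club subset. -/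
def IsStatSet {V : Type*} [LinearOrder V] (S : Set V) : Prop :=
  ∀ C : Set V, IsClubSet C → (S ∩ C).Nonempty

/-- The cofinality of the initial segment below `a`: the least cardinality of a
subset of `Set.Iio a` which is cofinal below `a`. -/
noncomputable def segCof {V : Type} [LinearOrder V] (a : V) : Cardinal :=
  sInf {c : Cardinal | ∃ s : Set V, s ⊆ Set.Iio a ∧ (∀ b < a, ∃ x ∈ s, b ≤ x) ∧ #s = c}

/-- The diamond principle `◇(S)` on a well-ordered type. -/
def HasDiamond {V : Type} [LinearOrder V] (S : Set V) : Prop :=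
  ∃ d : V → Set V, (∀ a ∈ S, d a ⊆ Set.Iio a) ∧
    ∀ A : Set V, IsStatSet {a | a ∈ S ∧ d a = A ∩ Set.Iio a}

/-!
Suppose a well-ordering `r` of the vertices left every vertex fewer than `λ` back-neighbours.
Since `λ < κ` and `κ` is regular and uncountable, the points closed under "take the
back-neighbours of an earlier vertex" form a club. Stationarity of `T` gives such a closure
point `α` and some `β ≥ α` with at least `λ` neighbours below `α`. Each of them is a
back-neighbour of `β`: if `β` came first in `r`, it would be a back-neighbour of a vertex below
`α`, hence itself below `α`. So `β` has at least `λ` back-neighbours, a contradiction.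
-/

open Set

theorem Cardinal.mk_insert_lt {α : Type*} {κ : Cardinal} (hκ : ℵ₀ ≤ κ) {s : Set α}
    (hs : #s < κ) (a : α) : #(insert a s : Set α) < κ :=
  mk_insert_le.trans_lt (add_one_lt_of_lt hκ hs)

def backNeighbors {V : Type} (G : SimpleGraph V) (r : V → V → Prop) (x : V) : Set V :=
  {y | G.Adj x y ∧ r y x}

theorem lt_colNum_of_forall_exists_le {V : Type} {G : SimpleGraph V} {lam : Cardinal}
    (h : ∀ r : V → V → Prop, IsWellOrder V r → ∃ x, lam ≤ #(backNeighbors G r x)) :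
    lam < colNum G := by
  have hne : {κ : Cardinal | ∃ r : V → V → Prop, IsWellOrder V r ∧
      ∀ x : V, #{y : V | G.Adj x y ∧ r y x} < κ}.Nonempty :=
    ⟨Order.succ #V, WellOrderingRel, inferInstance,
      fun _ => (mk_set_le _).trans_lt (Order.lt_succ _)⟩
  obtain ⟨r, hr, hback⟩ := csInf_mem hne
  obtain ⟨x, hx⟩ := h r hr
  exact hx.trans_lt (hback x)

section ClosurePoints

variable {V : Type} [LinearOrder V] {κ : Cardinal}

def closurePoints (f : V → Set V) : Set V :=
  {a | ∀ b < a, f b ⊆ Iio a}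

theorem mk_Iic_lt (hκ : ℵ₀ ≤ κ) (hseg : ∀ a : V, #(Iio a) < κ) (a : V) : #(Iic a) < κ := by
  rw [← Iio_insert]
  exact mk_insert_lt hκ (hseg a) a

theorem exists_forall_lt_of_mk_lt (hreg : κ.IsRegular) (hcard : #V = κ)
    (hseg : ∀ a : V, #(Iio a) < κ) {s : Set V} (hs : #s < κ) : ∃ u, ∀ x ∈ s, x < u := by
  by_contra! h
  have hcover : (univ : Set V) ⊆ ⋃ x : s, Iic (x : V) := fun v _ => by
    obtain ⟨x, hx, hvx⟩ := h v
    exact mem_iUnion.2 ⟨⟨x, hx⟩, hvx⟩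
  have hsmall : #V < κ := calc
    #V = #(univ : Set V) := mk_univ.symm
    _ ≤ #(⋃ x : s, Iic (x : V)) := mk_le_mk_of_subset hcover
    _ ≤ sum fun x : s => #(Iic (x : V)) := mk_iUnion_le_sum_mk
    _ < κ := sum_lt_of_isRegular hreg hs fun x => mk_Iic_lt hreg.aleph0_le hseg x
  exact hsmall.ne hcard

theorem exists_closure_step (hreg : κ.IsRegular) (hcard : #V = κ)
    (hseg : ∀ a : V, #(Iio a) < κ) {f : V → Set V} (hf : ∀ x, #(f x) < κ) (x : V) :
    ∃ u, x < u ∧ ∀ b ≤ x, f b ⊆ Iio u := by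
  have hunion : #(⋃ b ∈ Iic x, f b) < κ := by
    rw [biUnion_eq_iUnion]
    exact mk_iUnion_le_sum_mk.trans_lt
      (sum_lt_of_isRegular hreg (mk_Iic_lt hreg.aleph0_le hseg x) fun b => hf b)
  obtain ⟨u, hu⟩ := exists_forall_lt_of_mk_lt hreg hcard hseg
    (mk_insert_lt hreg.aleph0_le hunion x)
  exact ⟨u, hu x (mem_insert x _), fun b hb y hy =>
    hu y (mem_insert_of_mem x (mem_biUnion (show b ∈ Iic x from hb) hy))⟩

theorem exists_least_strict_upperBound [WellFoundedLT V] {s : Set V}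
    (hs : ∃ u, ∀ x ∈ s, x < u) :
    ∃ b, (∀ x ∈ s, x < b) ∧ ∀ y < b, ∃ x ∈ s, y ≤ x := by
  obtain ⟨b, hb, hmin⟩ := wellFounded_lt.has_min {u | ∀ x ∈ s, x < u} hs
  refine ⟨b, hb, fun y hy => ?_⟩
  by_contra! hlt
  exact hmin y hlt hy

theorem mem_closurePoints_of_cofinal {f : V → Set V} {c : ℕ → V} {b : V}
    (hc : ∀ n, ∀ x ≤ c n, f x ⊆ Iio (c (n + 1))) (hb : ∀ n, c n < b)
    (hcof : ∀ y < b, ∃ n, y ≤ c n) : b ∈ closurePoints f := fun y hy => by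
  obtain ⟨n, hn⟩ := hcof y hy
  exact (hc n y hn).trans (Iio_subset_Iio (hb (n + 1)).le)

theorem closurePoints_unbounded [WellFoundedLT V] (hreg : κ.IsRegular) (hunc : ℵ₀ < κ)
    (hcard : #V = κ) (hseg : ∀ a : V, #(Iio a) < κ) {f : V → Set V}
    (hf : ∀ x, #(f x) < κ) (a : V) : ∃ b ∈ closurePoints f, a < b := by
  choose g hg_lt hg_closed using exists_closure_step hreg hcard hseg hf
  set c : ℕ → V := fun n => g^[n + 1] a
  have hc_succ : ∀ n, c (n + 1) = g (c n) := fun n => Function.iterate_succ_apply' g _ a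
  have hbdd : ∃ u, ∀ x ∈ range c, x < u :=
    exists_forall_lt_of_mk_lt hreg hcard hseg
      ((mk_range_le.trans mk_nat.le).trans_lt hunc)
  obtain ⟨b, hb, hcof⟩ := exists_least_strict_upperBound hbdd
  refine ⟨b, mem_closurePoints_of_cofinal (c := c) ?_ (fun n => hb _ (mem_range_self n)) ?_,
    (hg_lt a).trans (hb _ (mem_range_self 0))⟩
  · intro n x hx
    rw [hc_succ]
    exact hg_closed (c n) x hx
  · intro y hy
    obtain ⟨_, ⟨n, rfl⟩, hyn⟩ := hcof y hy
    exact ⟨n, hyn⟩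

theorem isClubSet_closurePoints [WellFoundedLT V] (hreg : κ.IsRegular) (hunc : ℵ₀ < κ)
    (hcard : #V = κ) (hseg : ∀ a : V, #(Iio a) < κ) {f : V → Set V}
    (hf : ∀ x, #(f x) < κ) : IsClubSet (closurePoints f) :=
  ⟨closurePoints_unbounded hreg hunc hcard hseg hf, fun _ _ hacc b hb => by
    obtain ⟨c, hc, hbc, hca⟩ := hacc b hb
    exact (hc b hbc).trans (Iio_subset_Iio hca.le)⟩

theorem adj_lt_subset_backNeighbors {G : SimpleGraph V} {r : V → V → Prop}
    [IsWellOrder V r] {a b : V} (ha : a ∈ closurePoints (backNeighbors G r)) (hab : a ≤ b) :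
    {c | G.Adj b c ∧ c < a} ⊆ backNeighbors G r b := by
  rintro c ⟨hadj, hca⟩
  rcases trichotomous_of r c b with hcb | rfl | hbc
  · exact ⟨hadj, hcb⟩
  · exact absurd hadj (G.loopless.irrefl c)
  · exact absurd (ha c hca ⟨hadj.symm, hbc⟩) hab.not_gt

end ClosurePoints

theorem lt_colNum_of_stationary_general {V : Type} [LinearOrder V] [WellFoundedLT V]
    (κ lam : Cardinal) (hreg : κ.IsRegular) (hunc : ℵ₀ < κ)
    (hcard : #V = κ) (hseg : ∀ a : V, #{b : V | b < a} < κ)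
    (hlamκ : lam < κ)
    (G : SimpleGraph V)
    (hT : IsStatSet {a : V | ∃ b : V, a ≤ b ∧ lam ≤ #{c : V | G.Adj b c ∧ c < a}}) :
    lam < colNum G := by
  refine lt_colNum_of_forall_exists_le fun r hr => ?_
  by_contra! hback
  have hclub := isClubSet_closurePoints hreg hunc hcard hseg fun x => (hback x).trans hlamκ
  obtain ⟨a, ⟨b, hab, hbig⟩, ha⟩ := hT _ hclub
  exact (hbig.trans (mk_le_mk_of_subset (adj_lt_subset_backNeighbors ha hab))).not_gt (hback b)

/-- Let `X` be a graph on a regular uncountable cardinal `κ`, `λ < κ` infinite,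
with every subgraph of size `< κ` of coloring number `≤ λ`.  If
`T = {α : ∃ β ≥ α, |E^β ∩ α| ≥ λ}` is stationary, then `col(X) > λ`. -/
theorem lt_colNum_of_stationary {V : Type} [LinearOrder V] [WellFoundedLT V]
    (κ lam : Cardinal) (hreg : κ.IsRegular) (hunc : ℵ₀ < κ)
    (hcard : #V = κ) (hseg : ∀ a : V, #{b : V | b < a} < κ)
    (hlam : ℵ₀ ≤ lam) (hlamκ : lam < κ)
    (G : SimpleGraph V)
    (hsmall : ∀ H : G.Subgraph, #H.verts < κ → colNum H.coe ≤ lam)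
    (hT : IsStatSet {a : V | ∃ b : V, a ≤ b ∧ lam ≤ #{c : V | G.Adj b c ∧ c < a}}) :
    lam < colNum G :=
  lt_colNum_of_stationary_general κ lam hreg hunc hcard hseg hlamκ G hT
end

section
/- Let κ be regular uncountable, λ < κ infinite, X = (κ, E) a graph with every subgraph of size < κ having coloring number ≤ λ. If S = {α ∈ κ ∩ Cof(cf(λ)) : ∃β ≥ α, |E^β ∩ α| ≥ λ} is non-stationary, then T = {α < κ : ∃β ≥ α, |E^β ∩ α| ≥ λ} is non-stationary. -/
/-!
Fix a club `C` disjoint from `S`. For `α ∈ T ∩ C` with witness `β`, the set `W = E^β ∩ α` has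
size at least `λ`. If every `W ∩ γ` with `γ < α` had size `< λ`, then `W` would have order type
`λ` and be cofinal in `α`, so `cf α = cf λ` and `α ∈ S ∩ C = ∅`. Hence some `g(α) < α` already
satisfies `|E^β ∩ g(α)| ≥ λ`. Pressing down on the stationary set `T ∩ C` yields `γ₀` whose fiber
`g⁻¹(γ₀)` is unbounded, so every `α > γ₀` lies in `T`. But `C` contains points of cofinality
`cf λ` above `γ₀`, and those would lie in `S ∩ C`.
-/

open Cardinal

universe u

open Order Set
open scoped Ordinal

theorem segCof_eq_cof_Iio {V : Type} [LinearOrder V] (a : V) : segCof a = cof (Iio a) := by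
  refine le_antisymm ?_ (le_csInf ⟨_, Iio a, subset_rfl, fun b hb => ⟨b, hb, le_rfl⟩, rfl⟩ ?_)
  · obtain ⟨s, hs, hcard⟩ := exists_cof_eq (Iio a)
    refine csInf_le' ⟨Subtype.val '' s, by simp, fun b hb => ?_, ?_⟩
    · obtain ⟨x, hx, hbx⟩ := hs ⟨b, hb⟩
      exact ⟨x, mem_image_of_mem _ hx, hbx⟩
    · rw [mk_image_eq Subtype.val_injective, hcard]
  · rintro _ ⟨s, hsa, hs, rfl⟩
    refine (cof_le fun b => ?_).trans
      (mk_preimage_of_injective_of_subset_range _ _ Subtype.val_injective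
        fun x hx => ⟨⟨x, hsa hx⟩, rfl⟩).le
    obtain ⟨x, hx, hbx⟩ := hs b b.2
    exact ⟨⟨x, hsa hx⟩, hx, hbx⟩

section LinearOrder

variable {α : Type u} [LinearOrder α]

theorem isClubSet_iff_isClub [NoMaxOrder α] {C : Set α} : IsClubSet C ↔ IsClub C := by
  refine ⟨fun hC => ⟨dirSupClosed_iff_of_linearOrder.2 fun d hd ⟨y, hy⟩ a ha => ?_, fun a => ?_⟩,
    fun hC => ⟨fun a => ?_, fun a ⟨b, hb⟩ hlim => ?_⟩⟩
  · by_cases had : a ∈ d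
    · exact hd had
    have hlt : ∀ x ∈ d, x < a := fun x hx => (ha.1 hx).lt_of_ne fun h => had (h ▸ hx)
    refine hC.2 a ⟨y, hlt y hy⟩ fun b hb => ?_
    obtain ⟨c, hc, hbc, -⟩ := ha.exists_between hb
    exact ⟨c, hd hc, hbc, hlt c hc⟩
  · obtain ⟨b, hb, hab⟩ := hC.1 a
    exact ⟨b, hb, hab.le⟩
  · obtain ⟨a', ha'⟩ := exists_gt a
    obtain ⟨b, hb, hab⟩ := hC.isCofinal a'
    exact ⟨b, hb, ha'.trans_le hab⟩
  · obtain ⟨c, hc, -, hca⟩ := hlim b hb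
    refine hC.isLUB_mem (t := C ∩ Iio a) inter_subset_left ⟨c, hc, hca⟩
      ⟨fun x hx => hx.2.le, fun u hu => ?_⟩
    by_contra! hua
    obtain ⟨c, hc, huc, hca⟩ := hlim u hua
    exact (hu ⟨hc, hca⟩).not_gt huc

theorem isStatSet_iff_isStationary [NoMaxOrder α] {S : Set α} : IsStatSet S ↔ IsStationary S := by
  simp only [IsStatSet, IsStationary, isClubSet_iff_isClub]

theorem exists_forall_lt_of_mk_lt_cof {s : Set α} (hs : #s < cof α) : ∃ x, ∀ y ∈ s, y < x :=
  not_isCofinal_iff.1 fun h => (cof_le h).not_gt hs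

theorem cof_Iio_eq_of_isLUB_range {ι : Type u} [LinearOrder ι] [NoMaxOrder ι] {g : ι → α}
    (hg : StrictMono g) {x : α} (hx : IsLUB (range g) x) : cof (Iio x) = cof ι := by
  have hgx (i : ι) : g i < x :=
    let ⟨j, hij⟩ := exists_gt i
    (hg hij).trans_le (hx.1 ⟨j, rfl⟩)
  refine (cof_congr_of_strictMono (f := fun i => ⟨g i, hgx i⟩) (fun _ _ h => hg h) ?_).symm
  rintro ⟨b, hb⟩
  obtain ⟨_, ⟨i, rfl⟩, hbi, -⟩ := hx.exists_between hb
  exact ⟨_, ⟨i, rfl⟩, hbi.le⟩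

end LinearOrder

section WellFoundedLT

variable {α : Type*} [LinearOrder α] [WellFoundedLT α]

theorem exists_isLUB_of_bddAbove {s : Set α} (hs : BddAbove s) : ∃ x, IsLUB s x :=
  ⟨_, wellFounded_lt.min_mem _ hs, fun _ hy => wellFounded_lt.min_le hy⟩

theorem type_lt_eq_ord {c : Cardinal} (hc : c ≤ #α) (hα : ∀ x : α, #(Iio x) < c) :
    typeLT α = c.ord := by
  refine le_antisymm (le_of_forall_lt fun o ho => ?_) (ord_le.2 (by rwa [Ordinal.card_type]))
  obtain ⟨x, rfl⟩ := Ordinal.typein_surj _ ho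
  exact lt_ord.2 (hα x)

theorem cof_Iio_eq_of_le_mk {a : α} {W : Set α} {c : Cardinal} (hW : W ⊆ Iio a) (hcW : c ≤ #W)
    (hsmall : ∀ b < a, #↑(W ∩ Iio b) < c) : cof (Iio a) = c.ord.cof := by
  have hcofinal : ∀ b < a, ∃ w ∈ W, b ≤ w := by
    intro b hb
    by_contra! H
    exact (hsmall b hb).not_ge (hcW.trans (mk_le_mk_of_subset fun w hw => ⟨hw, H w hw⟩))
  have hcof : cof W = cof (Iio a) := by
    refine cof_congr_of_strictMono (f := inclusion hW) (fun _ _ h => h) fun ⟨b, hb⟩ => ?_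
    obtain ⟨w, hw, hbw⟩ := hcofinal b hb
    exact ⟨_, ⟨⟨w, hw⟩, rfl⟩, hbw⟩
  rw [← hcof, ← Ordinal.cof_type, type_lt_eq_ord hcW fun w => ?_]
  refine lt_of_le_of_lt ?_ (hsmall w (hW w.2))
  exact mk_le_of_injective (f := fun y => ⟨y.1.1, y.1.2, y.2⟩) fun y z h => by
    simpa [Subtype.ext_iff] using h

theorem IsStationary.inter_isClub (hα : cof α ≠ ℵ₀) {s t : Set α} (hs : IsStationary s)
    (ht : IsClub t) : IsStationary (s ∩ t) := fun u hu => by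
  simpa only [inter_assoc] using hs (ht.inter hα hu)

theorem exists_strictMono_toType_of_isCofinal {s : Set α} (hs : IsCofinal s) {o : Ordinal}
    (ho : o.card < cof α) : ∃ g : o.ToType → α, StrictMono g ∧ range g ⊆ s := by
  have hle : typeLT o.ToType ≤ typeLT s := by
    rw [Ordinal.type_toType]
    exact (lt_ord.2 (ho.trans_le (cof_le hs))).le.trans (ord_le_type _)
  obtain ⟨e⟩ := Ordinal.type_le_iff'.1 hle
  exact ⟨fun i => e i, fun _ _ h => e.map_rel_iff.2 h, range_subset_iff.2 fun i => (e i).2⟩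

theorem IsClub.exists_gt_cof_Iio_eq [NoMaxOrder α] {C : Set α} (hC : IsClub C) {c : Cardinal}
    (hc : ℵ₀ ≤ c) (hcα : c < cof α) (a : α) : ∃ x ∈ C, a < x ∧ cof (Iio x) = c.ord.cof := by
  have hCa : IsCofinal (C ∩ Ioi a) := fun b => by
    obtain ⟨b', hb'⟩ := exists_gt (max a b)
    obtain ⟨x, hx, hbx⟩ := hC.isCofinal b'
    exact ⟨x, ⟨hx, (le_max_left a b).trans_lt (hb'.trans_le hbx)⟩,
      (le_max_right a b).trans (hb'.trans_le hbx).le⟩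
  obtain ⟨g, hg, hgC⟩ := exists_strictMono_toType_of_isCofinal hCa (o := c.ord) (by rwa [card_ord])
  have := Cardinal.noMaxOrder hc
  obtain ⟨i⟩ := Ordinal.nonempty_toType_iff.2 (ord_eq_zero.not.2 (aleph0_pos.trans_le hc).ne')
  obtain ⟨b, hb⟩ := exists_forall_lt_of_mk_lt_cof (s := range g)
    (mk_range_le.trans_lt (by rwa [mk_toType, card_ord]))
  obtain ⟨x, hx⟩ := exists_isLUB_of_bddAbove ⟨b, fun y hy => (hb y hy).le⟩
  refine ⟨x, hC.isLUB_mem (hgC.trans inter_subset_left) ⟨_, i, rfl⟩ hx,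
    (hgC ⟨i, rfl⟩).2.trans_le (hx.1 ⟨i, rfl⟩), ?_⟩
  rw [cof_Iio_eq_of_isLUB_range hg hx, Ordinal.cof_toType]

end WellFoundedLT

section IsRegularCardinalOrder

variable {α : Type*} [LinearOrder α] [WellFoundedLT α] [IsRegularCardinalOrder α]

theorem isClub_setOf_forall_lt_imp_lt (hα : ℵ₀ < cof α) (h : α → α) :
    IsClub {x | ∀ y < x, h y < x} := by
  refine ⟨dirSupClosed_iff_of_linearOrder.2 fun d hd _ x hx y hy => ?_, fun a => ?_⟩
  · obtain ⟨z, hz, hyz, -⟩ := hx.exists_between hy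
    exact (hd hz y hyz).trans_le (hx.1 hz)
  · have hsmall (p : α) : #(h '' Iio p) < cof α := by
      rw [cof_eq_cardinalMk]
      exact mk_image_le.trans_lt (mk_Iio_lt p ord_cardinalMk)
    choose F hF using fun p => exists_forall_lt_of_mk_lt_cof (hsmall p)
    obtain ⟨b, hb⟩ := exists_forall_lt_of_mk_lt_cof (s := range fun n : ℕ => F^[n] a)
      ((le_aleph0_iff_set_countable.2 (countable_range _)).trans_lt hα)
    obtain ⟨x, hx⟩ := exists_isLUB_of_bddAbove ⟨b, fun y hy => (hb y hy).le⟩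
    refine ⟨x, fun y hy => ?_, hx.1 ⟨0, rfl⟩⟩
    obtain ⟨_, ⟨n, rfl⟩, hyn, -⟩ := hx.exists_between hy
    exact (hF _ _ (mem_image_of_mem h hyn)).trans_le
      (hx.1 ⟨n + 1, Function.iterate_succ_apply' F n a⟩)

theorem IsStationary.exists_isCofinal_fiber (hα : ℵ₀ < cof α) {s : Set α} (hs : IsStationary s)
    {f : α → α} (hf : ∀ x ∈ s, f x < x) : ∃ y, IsCofinal {x ∈ s | f x = y} := by
  by_contra! H
  choose h hh using fun y => not_isCofinal_iff.1 (H y)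
  obtain ⟨x, hxs, hx⟩ := hs (isClub_setOf_forall_lt_imp_lt hα h)
  exact (hh (f x) x ⟨hxs, rfl⟩).asymm (hx (f x) (hf x hxs))

end IsRegularCardinalOrder

theorem T_not_stationary_of_S_not_stationary_general {V : Type} [LinearOrder V] [WellFoundedLT V]
    (κ lam : Cardinal) (hreg : κ.IsRegular) (hunc : ℵ₀ < κ)
    (hcard : #V = κ) (hseg : ∀ a : V, #{b : V | b < a} < κ)
    (hlam : ℵ₀ ≤ lam) (hlamκ : lam < κ)
    (G : SimpleGraph V)
    (hS : ¬ IsStatSet {a : V | segCof a = lam.ord.cof ∧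
      ∃ b : V, a ≤ b ∧ lam ≤ #{c : V | G.Adj b c ∧ c < a}}) :
    ¬ IsStatSet {a : V | ∃ b : V, a ≤ b ∧ lam ≤ #{c : V | G.Adj b c ∧ c < a}} := by
  have htype : typeLT V = κ.ord := type_lt_eq_ord hcard.ge hseg
  have hcof : cof V = κ := by rw [← Ordinal.cof_type, htype, hreg.cof_ord]
  have : IsRegularCardinalOrder V := ⟨by rw [htype, hcof]⟩
  have : NoMaxOrder V :=
    Ordinal.isSuccPrelimit_type_lt_iff.1 (htype ▸ (isSuccLimit_ord hreg.aleph0_le).isSuccPrelimit)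
  simp only [isStatSet_iff_isStationary, segCof_eq_cof_Iio] at hS ⊢
  intro hT
  obtain ⟨C, hC, hSC⟩ := not_isStationary_iff.1 hS
  have hpress : ∀ a ∈ {a | ∃ b, a ≤ b ∧ lam ≤ #{c | G.Adj b c ∧ c < a}} ∩ C,
      ∃ γ < a, ∃ b, a ≤ b ∧ lam ≤ #{c | G.Adj b c ∧ c < γ} := by
    rintro a ⟨⟨b, hab, hb⟩, haC⟩
    by_contra! H
    refine hSC.ne_of_mem (a := a) ⟨?_, b, hab, hb⟩ haC rfl
    refine cof_Iio_eq_of_le_mk (fun c hc => hc.2) hb fun γ hγ =>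
      lt_of_le_of_lt (mk_le_mk_of_subset ?_) (H γ hγ b hab)
    exact fun c hc => ⟨hc.1.1, hc.2⟩
  choose! g hg using hpress
  obtain ⟨γ₀, hγ₀⟩ := (hT.inter_isClub (by rw [hcof]; exact hunc.ne') hC).exists_isCofinal_fiber
    (by rwa [hcof]) fun a ha => (hg a ha).1
  obtain ⟨x, hxC, hγx, hx⟩ := hC.exists_gt_cof_Iio_eq hlam (by rwa [hcof]) γ₀
  obtain ⟨a, ⟨ha, rfl⟩, hxa⟩ := hγ₀ x
  obtain ⟨-, b, hab, hb⟩ := hg a ha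
  exact hSC.ne_of_mem (a := x) ⟨hx, b, hxa.trans hab,
    hb.trans (mk_le_mk_of_subset fun c hc => ⟨hc.1, hc.2.trans hγx⟩)⟩ hxC rfl

/-- If `S = {α ∈ κ ∩ Cof(cf(λ)) : ∃ β ≥ α, |E^β ∩ α| ≥ λ}` is non-stationary,
then `T = {α < κ : ∃ β ≥ α, |E^β ∩ α| ≥ λ}` is non-stationary. -/
theorem T_not_stationary_of_S_not_stationary {V : Type} [LinearOrder V] [WellFoundedLT V]
    (κ lam : Cardinal) (hreg : κ.IsRegular) (hunc : ℵ₀ < κ)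
    (hcard : #V = κ) (hseg : ∀ a : V, #{b : V | b < a} < κ)
    (hlam : ℵ₀ ≤ lam) (hlamκ : lam < κ)
    (G : SimpleGraph V)
    (hsmall : ∀ H : G.Subgraph, #H.verts < κ → colNum H.coe ≤ lam)
    (hS : ¬ IsStatSet {a : V | segCof a = lam.ord.cof ∧
      ∃ b : V, a ≤ b ∧ lam ≤ #{c : V | G.Adj b c ∧ c < a}}) :
    ¬ IsStatSet {a : V | ∃ b : V, a ≤ b ∧ lam ≤ #{c : V | G.Adj b c ∧ c < a}} :=
  T_not_stationary_of_S_not_stationary_general κ lam hreg hunc hcard hseg hlam hlamκ G hS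
end

section
/- Assume CH. Let X = (κ, E) be a κ-nice graph on κ ≥ ω₂. Then for every countable set x ⊆ κ, the set {β < κ : E^β ∩ x is infinite} is at most countable. -/
open Cardinal

/-!
If uncountably many vertices had infinitely many neighbours in `x`, choose `ℵ₁` of them and add
`x`. The induced subgraph has size `ℵ₁`, so it has coloring number `≤ ω`: some well-order gives
every vertex only finitely many earlier neighbours. A vertex with infinitely many neighbours in
`x` must precede one of them, so the chosen vertices lie in a countable union of finite sets.
-/

section ColoringNumber

variable {V : Type} (G : SimpleGraph V)

theorem exists_wellOrder_mk_lt_colNum :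
    ∃ r : V → V → Prop, IsWellOrder V r ∧ ∀ v, #{y | G.Adj v y ∧ r y v} < colNum G := by
  have hne : {κ : Cardinal | ∃ r : V → V → Prop, IsWellOrder V r ∧
      ∀ v, #{y | G.Adj v y ∧ r y v} < κ}.Nonempty :=
    ⟨Order.succ #V, WellOrderingRel, WellOrderingRel.isWellOrder,
      fun _ => (mk_set_le _).trans_lt (Order.lt_succ _)⟩
  exact csInf_mem hne

theorem exists_wellOrder_finite_of_colNum_le_aleph0 (hG : colNum G ≤ ℵ₀) :
    ∃ r : V → V → Prop, IsWellOrder V r ∧ ∀ v, {y | G.Adj v y ∧ r y v}.Finite := by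
  obtain ⟨r, hr, hlt⟩ := exists_wellOrder_mk_lt_colNum G
  exact ⟨r, hr, fun v => lt_aleph0_iff_set_finite.mp ((hlt v).trans_le hG)⟩

theorem countable_setOf_infinite_inter_neighborSet_of_finite {r : V → V → Prop}
    [Std.Trichotomous r] (hr : ∀ v, {y | G.Adj v y ∧ r y v}.Finite) {x : Set V}
    (hx : x.Countable) : {b | (x ∩ G.neighborSet b).Infinite}.Countable := by
  have hsub : {b | (x ∩ G.neighborSet b).Infinite} ⊆ ⋃ c ∈ x, {y | G.Adj c y ∧ r y c} := by
    intro b hb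
    by_contra hnot
    simp only [Set.mem_iUnion, not_exists] at hnot
    refine hb ((hr b).subset fun c ⟨hcx, hbc⟩ => ⟨hbc, ?_⟩)
    rcases trichotomous_of r c b with h | rfl | h
    · exact h
    · exact (G.irrefl hbc).elim
    · exact (hnot c hcx ⟨hbc.symm, h⟩).elim
  exact (hx.biUnion fun c _ => (hr c).countable).mono hsub

theorem countable_setOf_infinite_inter_neighborSet (hG : colNum G ≤ ℵ₀) {x : Set V}
    (hx : x.Countable) : {b | (x ∩ G.neighborSet b).Infinite}.Countable := by
  obtain ⟨r, _, hr⟩ := exists_wellOrder_finite_of_colNum_le_aleph0 G hG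
  exact countable_setOf_infinite_inter_neighborSet_of_finite G hr hx

theorem countable_inter_setOf_infinite_inter_neighborSet_of_induce {W x : Set V}
    (hxW : x ⊆ W) (hx : x.Countable) (hW : colNum ((⊤ : G.Subgraph).induce W).coe ≤ ℵ₀) :
    (W ∩ {b | (x ∩ G.neighborSet b).Infinite}).Countable := by
  set H := (⊤ : G.Subgraph).induce W
  have hH := countable_setOf_infinite_inter_neighborSet H.coe hW
    (hx.preimage Subtype.val_injective)
  refine (hH.image Subtype.val).mono ?_
  rintro b ⟨hbW, hb⟩
  have himage : x ∩ G.neighborSet b ⊆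
      Subtype.val '' (Subtype.val ⁻¹' x ∩ H.coe.neighborSet ⟨b, hbW⟩) :=
    fun c ⟨hcx, hbc⟩ => ⟨⟨c, hxW hcx⟩, ⟨hcx, hbW, hxW hcx, hbc⟩, rfl⟩
  exact ⟨⟨b, hbW⟩, fun hfin => hb ((hfin.image _).subset himage), rfl⟩

end ColoringNumber

theorem exists_superset_mk_eq_aleph_one_not_countable_inter {α : Type*} {x S : Set α}
    (hx : x.Countable) (hS : ¬ S.Countable) :
    ∃ W, x ⊆ W ∧ #W = ℵ₁ ∧ ¬ (W ∩ S).Countable := by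
  obtain ⟨B, hBS, hB⟩ := le_mk_iff_exists_subset.mp
    (aleph_one_le_iff.mpr (lt_of_not_ge (hS ∘ le_aleph0_iff_set_countable.mp)))
  have hBunc : ¬ B.Countable := fun h =>
    (le_aleph0_iff_set_countable.mpr h).not_gt (hB ▸ aleph0_lt_aleph_one)
  refine ⟨x ∪ B, Set.subset_union_left, le_antisymm ?_ ?_, fun h => hBunc (h.mono ?_)⟩
  · refine (mk_union_le x B).trans (add_le_of_le aleph0_lt_aleph_one.le ?_ hB.le)
    exact (le_aleph0_iff_set_countable.mpr hx).trans aleph0_lt_aleph_one.le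
  · exact hB ▸ mk_le_mk_of_subset Set.subset_union_right
  · exact fun b hb => ⟨Set.subset_union_right hb, hBS hb⟩

theorem countable_of_knice_general {V : Type}
    (G : SimpleGraph V)
    (hnice2 : ∀ H : G.Subgraph, #H.verts = Cardinal.aleph 1 → colNum H.coe ≤ ℵ₀)
    (x : Set V) (hx : x.Countable) :
    {b : V | (x ∩ {c : V | G.Adj b c}).Infinite}.Countable := by
  by_contra hS
  obtain ⟨W, hxW, hW, hWS⟩ := exists_superset_mk_eq_aleph_one_not_countable_inter hx hS
  exact hWS (countable_inter_setOf_infinite_inter_neighborSet_of_induce G hxW hx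
    (hnice2 ((⊤ : G.Subgraph).induce W) hW))

/-- Assume CH.  If `X` is a `κ`-nice graph on `κ ≥ ω₂`, then for every countable
set `x` of vertices, the set of vertices having infinitely many neighbors in `x`
is at most countable. -/
theorem countable_of_knice {V : Type} [LinearOrder V] [WellFoundedLT V]
    (κ : Cardinal) (hκ : Cardinal.aleph 2 ≤ κ) (hCH : 2 ^ ℵ₀ = Cardinal.aleph 1)
    (hcard : #V = κ) (hseg : ∀ a : V, #{b : V | b < a} < κ)
    (G : SimpleGraph V)
    (hnice1 : colNum G ≤ Cardinal.aleph 1)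
    (hnice2 : ∀ H : G.Subgraph, #H.verts = Cardinal.aleph 1 → colNum H.coe ≤ ℵ₀)
    (hnice3 : ∀ a : V, #{b : V | G.Adj a b ∧ b < a} ≤ ℵ₀)
    (x : Set V) (hx : x.Countable) :
    {b : V | (x ∩ {c : V | G.Adj b c}).Infinite}.Countable :=
  countable_of_knice_general G hnice2 x hx
end

section
/- Let X be a graph and λ an infinite cardinal. Suppose there is a filtration ⟨X_α : α < δ⟩ of the vertex set of X (increasing, continuous, union all of X, each of size < |X|) such that for every α < δ: List(X_α) ≤ λ (as an induced subgraph), and for every vertex x ∉ X_α, |E^x ∩ X_α| < λ. Then List(X) ≤ λ. -/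
open Cardinal

/-!
Rank each vertex by the first stage `α` with `v ∈ Xf α`. By continuity no vertex enters at a
limit stage, so a vertex entering at `γ + 1` has all its neighbours of smaller rank in `Xf γ`,
hence fewer than `λ` of them; and each layer of equal rank lies in one `Xf α`, hence is
`λ`-list-colorable. Now color the layers in increasing order: every vertex first discards the
fewer than `λ` colors of its earlier neighbours, and since `λ` is infinite its list keeps size `λ`.
-/
section

variable {V : Type} {G : SimpleGraph V} {κ lam : Cardinal}

theorem ListColorable.mono (h : ListColorable G κ) (hle : κ ≤ lam) : ListColorable G lam := by
  intro C F hF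
  have hsub : ∀ x, ∃ s ⊆ F x, #s = κ := fun x =>
    le_mk_iff_exists_subset.mp ((hF x).symm ▸ hle)
  choose F₀ hF₀ hF₀card using hsub
  obtain ⟨f, hf, hmem⟩ := h C F₀ hF₀card
  exact ⟨f, hf, fun x => hF₀ x (hmem x)⟩

/-- Vertices outside the image of `e` get lists of fresh colors, which the coloring of `G`
may use freely. -/
theorem ListColorable.of_embedding {W : Type} {H : SimpleGraph W} (e : H ↪g G)
    (h : ListColorable G κ) : ListColorable H κ := by
  classical
  intro C F hF
  let F' : V → Set (C ⊕ κ.out) :=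
    Function.extend e (fun w => Sum.inl '' F w) (fun _ => Set.range Sum.inr)
  have hF' : ∀ v, #(F' v) = κ := by
    intro v
    by_cases hv : ∃ w, e w = v
    · obtain ⟨w, rfl⟩ := hv
      rw [show F' (e w) = _ from e.injective.extend_apply _ _ w, mk_image_eq Sum.inl_injective, hF]
    · rw [show F' v = _ from Function.extend_apply' _ _ _ hv, mk_range_eq _ Sum.inr_injective,
        mk_out]
  obtain ⟨g, hg, hgF⟩ := h _ F' hF'
  have hlift : ∀ w, ∃ c ∈ F w, Sum.inl c = g (e w) := fun w => by
    simpa [F', e.injective.extend_apply] using hgF (e w)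
  choose f hfF hfg using hlift
  refine ⟨f, fun x y hxy hf => hg (e.map_adj_iff.mpr hxy) ?_, hfF⟩
  rw [← hfg, ← hfg, hf]

theorem ListColorable.of_subsingleton [Subsingleton V] (hκ : κ ≠ 0) : ListColorable G κ := by
  intro C F hF
  have hne : ∀ x, (F x).Nonempty := fun x =>
    mk_set_ne_zero_iff.mp (by rw [hF x]; exact hκ)
  refine ⟨fun x => (hne x).some, fun x y hxy => ?_, fun x => (hne x).some_mem⟩
  exact absurd (Subsingleton.elim x y) hxy.ne

theorem Cardinal.mk_sdiff_eq_of_lt {C : Type} {s t : Set C} (hlam : ℵ₀ ≤ lam) (hs : #s = lam)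
    (ht : #t < lam) : #(s \ t : Set C) = lam := by
  refine le_antisymm (hs ▸ mk_le_mk_of_subset Set.sdiff_subset) (not_lt.mp fun hlt => ?_)
  have := (le_mk_sdiff_add_mk s t).trans_lt (add_lt_of_lt hlam hlt ht)
  exact (hs ▸ this).false

theorem ListColorable.of_layers {ι : Type*} [LinearOrder ι] [WellFoundedLT ι] (hlam : ℵ₀ ≤ lam)
    (r : V → ι) (hlayer : ∀ v, ListColorable (G.induce (r ⁻¹' {r v})) lam)
    (hlower : ∀ v, #{y | G.Adj v y ∧ r y < r v} < lam) : ListColorable G lam := by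
  intro C F hF
  -- A layer can be colored avoiding the colors of lower neighbours, whatever those colors are.
  have hstep : ∀ i, (∃ v, r v = i) → ∀ lower : (∀ y, r y < i → C),
      ∃ g : r ⁻¹' {i} → C, IsGoodColoring (G.induce (r ⁻¹' {i})) g ∧
        ∀ x : r ⁻¹' {i}, g x ∈ F x ∧ ∀ y (hy : r y < i), G.Adj x y → g x ≠ lower y hy := by
    rintro i ⟨v, rfl⟩ lower
    let N : V → Set C := fun x =>
      Set.range fun y : {y // G.Adj x y ∧ r y < r v} => lower y y.2.2
    have hN : ∀ x : r ⁻¹' {r v}, #(N x) < lam := by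
      rintro ⟨x, hx : r x = r v⟩
      have := hlower x
      rw [hx] at this
      exact mk_range_le.trans_lt this
    obtain ⟨g, hg, hgF⟩ := hlayer v C (fun x => F x \ N x) fun x =>
      mk_sdiff_eq_of_lt hlam (hF x) (hN x)
    exact ⟨g, hg, fun x => ⟨(hgF x).1, fun y hy hxy h => (hgF x).2 ⟨⟨y, hxy, hy⟩, h.symm⟩⟩⟩
  -- The witness of `∃ v, r v = i` is a proof, so all vertices of a layer use the same choice.
  let f : V → C := (wellFounded_lt.onFun (f := r)).fix fun v lower =>
    (hstep (r v) ⟨v, rfl⟩ lower).choose ⟨v, rfl⟩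
  have hf : ∀ i hi v (hv : r v = i), f v = (hstep i hi fun y _ => f y).choose ⟨v, hv⟩ := by
    rintro _ _ v rfl
    exact WellFounded.fix_eq _ _ v
  have hspec := fun i hi => (hstep i hi fun y _ => f y).choose_spec
  refine ⟨f, fun x y hxy => ?_, fun v => hf _ ⟨v, rfl⟩ v rfl ▸ ((hspec _ ⟨v, rfl⟩).2 ⟨v, rfl⟩).1⟩
  rcases lt_trichotomy (r x) (r y) with hlt | heq | hgt
  · rw [hf _ ⟨y, rfl⟩ y rfl]
    exact (((hspec _ ⟨y, rfl⟩).2 _).2 x hlt hxy.symm).symm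
  · rw [hf _ ⟨y, rfl⟩ x heq, hf _ ⟨y, rfl⟩ y rfl]
    exact (hspec _ ⟨y, rfl⟩).1 hxy
  · rw [hf _ ⟨x, rfl⟩ x rfl]
    exact ((hspec _ ⟨x, rfl⟩).2 _).2 y hgt hxy

/-- Greedy coloring along a well-order of `V`, seen as a layering into singletons. -/
theorem listColorable_of_mk_lt (hlam : ℵ₀ ≤ lam) (hV : #V < lam) : ListColorable G lam := by
  let r := Ordinal.typein (α := V) WellOrderingRel
  refine ListColorable.of_layers hlam r (fun v => ?_) fun v => (mk_subtype_le _).trans_lt hV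
  have : Subsingleton (r ⁻¹' {r v}) :=
    (Set.subsingleton_singleton.preimage r.injective).coe_sort
  exact ListColorable.of_subsingleton (aleph0_pos.trans_le hlam).ne'

theorem listColorable_of_listChromatic_le (h : listChromatic G ≤ lam) : ListColorable G lam := by
  have hV : #V < Order.succ (max ℵ₀ #V) := (le_max_right _ _).trans_lt (Order.lt_succ _)
  have hcol := listColorable_of_mk_lt (G := G) ((le_max_left _ _).trans (Order.le_succ _)) hV
  exact ListColorable.mono (csInf_mem (s := {κ | ListColorable G κ}) ⟨_, hcol⟩) h

/-- Junk value `0` if `v` lies in no `Xf α`. -/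
noncomputable def firstStage (Xf : Ordinal → Set V) (v : V) : Ordinal :=
  sInf {α | v ∈ Xf α}

section firstStage

variable {Xf : Ordinal → Set V} {v : V} {α δ : Ordinal}

theorem firstStage_le (h : v ∈ Xf α) : firstStage Xf v ≤ α :=
  csInf_le' h

theorem mem_firstStage (h : v ∈ Xf α) : v ∈ Xf (firstStage Xf v) :=
  csInf_mem (s := {α | v ∈ Xf α}) ⟨α, h⟩

theorem notMem_of_lt_firstStage (h : α < firstStage Xf v) : v ∉ Xf α :=
  notMem_of_lt_csInf' (s := {α | v ∈ Xf α}) h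

theorem firstStage_lt_and_mem (hunion : ⋃ α : Set.Iio δ, Xf ↑α = Set.univ) (v : V) :
    firstStage Xf v < δ ∧ v ∈ Xf (firstStage Xf v) := by
  obtain ⟨⟨α, hα⟩, hv⟩ := Set.mem_iUnion.mp (hunion ▸ Set.mem_univ v)
  exact ⟨(firstStage_le hv).trans_lt hα, mem_firstStage hv⟩

theorem mk_adj_firstStage_lt (hlam : lam ≠ 0)
    (hmono : ∀ α β : Ordinal, α ≤ β → β < δ → Xf α ⊆ Xf β)
    (hcont : ∀ α < δ, Order.IsSuccLimit α → Xf α = ⋃ β : Set.Iio α, Xf ↑β)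
    (hunion : ⋃ α : Set.Iio δ, Xf ↑α = Set.univ)
    (hdeg : ∀ α < δ, ∀ x ∉ Xf α, #{y : V | y ∈ Xf α ∧ G.Adj x y} < lam) (v : V) :
    #{y | G.Adj v y ∧ firstStage Xf y < firstStage Xf v} < lam := by
  obtain ⟨hβδ, hvβ⟩ := firstStage_lt_and_mem hunion v
  rcases Ordinal.zero_or_succ_or_isSuccLimit (firstStage Xf v) with h0 | ⟨γ, hγ⟩ | hlim
  · simpa [h0] using hlam.bot_lt
  · have hγβ : γ < firstStage Xf v := hγ ▸ Order.lt_succ γ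
    refine (mk_le_mk_of_subset ?_).trans_lt
      (hdeg γ (hγβ.trans hβδ) v (notMem_of_lt_firstStage hγβ))
    rintro y ⟨hvy, hy⟩
    rw [← hγ, Order.lt_succ_iff] at hy
    exact ⟨hmono _ γ hy (hγβ.trans hβδ) (firstStage_lt_and_mem hunion y).2, hvy⟩
  · rw [hcont _ hβδ hlim] at hvβ
    obtain ⟨⟨γ, hγ⟩, hvγ⟩ := Set.mem_iUnion.mp hvβ
    exact absurd hvγ (notMem_of_lt_firstStage hγ)

end firstStage

end

theorem listChromatic_le_of_filtration_general {V : Type} (G : SimpleGraph V)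
    (lam : Cardinal) (hlam : ℵ₀ ≤ lam)
    (δ : Ordinal) (Xf : Ordinal → Set V)
    (hmono : ∀ α β : Ordinal, α ≤ β → β < δ → Xf α ⊆ Xf β)
    (hcont : ∀ α < δ, Order.IsSuccLimit α → Xf α = ⋃ β : Set.Iio α, Xf ↑β)
    (hunion : ⋃ α : Set.Iio δ, Xf ↑α = Set.univ)
    (hlist : ∀ α < δ, listChromatic (G.induce (Xf α)) ≤ lam)
    (hdeg : ∀ α < δ, ∀ x ∉ Xf α, #{y : V | y ∈ Xf α ∧ G.Adj x y} < lam) :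
    listChromatic G ≤ lam := by
  have hlayer (v : V) : ListColorable (G.induce (firstStage Xf ⁻¹' {firstStage Xf v})) lam := by
    have hsub : firstStage Xf ⁻¹' {firstStage Xf v} ⊆ Xf (firstStage Xf v) :=
      fun y (hy : firstStage Xf y = _) => hy ▸ (firstStage_lt_and_mem hunion y).2
    exact (listColorable_of_listChromatic_le
      (hlist _ (firstStage_lt_and_mem hunion v).1)).of_embedding (G.induceHomOfLE hsub)
  have hlower := mk_adj_firstStage_lt (G := G) (aleph0_pos.trans_le hlam).ne' hmono hcont hunion hdeg
  exact csInf_le' (ListColorable.of_layers hlam (firstStage Xf) hlayer hlower)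

/-- Filtration lemma: if `⟨X_α : α < δ⟩` is a filtration of the vertex set of
`X` such that each induced subgraph `X_α` has list-chromatic number `≤ λ` and
every vertex outside `X_α` has fewer than `λ` neighbors inside `X_α`, then
`List(X) ≤ λ`. -/
theorem listChromatic_le_of_filtration {V : Type} (G : SimpleGraph V)
    (lam : Cardinal) (hlam : ℵ₀ ≤ lam)
    (δ : Ordinal) (hδ : Order.IsSuccLimit δ) (Xf : Ordinal → Set V)
    (hmono : ∀ α β : Ordinal, α ≤ β → β < δ → Xf α ⊆ Xf β)
    (hcont : ∀ α < δ, Order.IsSuccLimit α → Xf α = ⋃ β : Set.Iio α, Xf ↑β)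
    (hsize : ∀ α < δ, #(Xf α) < #V)
    (hunion : ⋃ α : Set.Iio δ, Xf ↑α = Set.univ)
    (hlist : ∀ α < δ, listChromatic (G.induce (Xf α)) ≤ lam)
    (hdeg : ∀ α < δ, ∀ x ∉ Xf α, #{y : V | y ∈ Xf α ∧ G.Adj x y} < lam) :
    listChromatic G ≤ lam :=
  listChromatic_le_of_filtration_general G lam hlam δ Xf hmono hcont hunion hlist hdeg
end

section
/- Reflection of the list-chromatic number at the continuum implies CH: if every graph of size ≤ 2^ω with uncountable list-chromatic number has a subgraph of size ω₁ with uncountable list-chromatic number, then 2^ω = ω₁. -/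
/-!
The witness is `K_{ω, 2^ω}`, realised as the complete bipartite graph between `ℕ` and `ℕ → ℕ`.
It is not `ℵ₀`-list-colorable: give the left vertex `a` the list `{a} × S` and the right vertex
`g` the graph of `g` over `S`; the colors of the left vertices then define a function `g` whose
own color clashes with one of them.

On the other hand, a graph whose vertices outside a countable set `S` form an independent set of
size `< 𝔠` is `ℵ₀`-list-colorable. Indexing the choices on `S` by the branches of the binary tree
gives `𝔠` injective choices from the lists on `S` with pairwise almost disjoint ranges; an infinite
list outside `S` is covered by at most one of them, so some choice leaves a free color in every
such list. If `ℵ₁ < 𝔠`, every subgraph of `K_{ω, 2^ω}` of size `ℵ₁` is of this kind.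
-/

open Cardinal

open Set Function SimpleGraph

noncomputable def distinctChoice {C : Type*} {L : ℕ → Set C} (hL : ∀ n, (L n).Infinite) : ℕ → C
  | n => ((hL n).sdiff (finite_range fun k : Fin n => distinctChoice hL k)).nonempty.some

theorem distinctChoice_mem_diff {C : Type*} {L : ℕ → Set C} (hL : ∀ n, (L n).Infinite) (n : ℕ) :
    distinctChoice hL n ∈ L n \ range fun k : Fin n => distinctChoice hL k := by
  rw [distinctChoice]
  exact Nonempty.some_mem _

theorem exists_injective_forall_mem_of_infinite_s17 {ι C : Type*} [Countable ι] {L : ι → Set C}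
    (hL : ∀ i, (L i).Infinite) : ∃ p : ι → C, Injective p ∧ ∀ i, p i ∈ L i := by
  cases isEmpty_or_nonempty ι
  · exact ⟨isEmptyElim, fun i => isEmptyElim i, fun i => isEmptyElim i⟩
  obtain ⟨e, he⟩ := Countable.exists_injective_nat ι
  let q := distinctChoice fun n => hL (invFun e n)
  have hq : Injective q := by
    intro m n hmn
    by_contra hne
    rcases Ne.lt_or_gt hne with h | h
    · exact (distinctChoice_mem_diff _ n).2 ⟨⟨m, h⟩, hmn⟩
    · exact (distinctChoice_mem_diff _ m).2 ⟨⟨n, h⟩, hmn.symm⟩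
  refine ⟨q ∘ e, hq.comp he, fun i => ?_⟩
  have := (distinctChoice_mem_diff (fun n => hL (invFun e n)) (e i)).1
  rwa [leftInverse_invFun he i] at this

theorem exists_choices_pairwise_finite_inter_range {ι C : Type*} [Countable ι] {L : ι → Set C}
    (hL : ∀ i, (L i).Infinite) :
    ∃ c : (ℕ → Bool) → ι → C, (∀ x, Injective (c x)) ∧ (∀ x i, c x i ∈ L i) ∧
      Pairwise fun x y => (range (c x) ∩ range (c y)).Finite := by
  obtain ⟨e, he⟩ := Countable.exists_injective_nat ι
  obtain ⟨p, hp, hpL⟩ := exists_injective_forall_mem_of_infinite_s17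
    (L := fun si : List Bool × ι => L si.2) fun si => hL si.2
  -- the color of `i` along the branch `x` remembers the first `e i` values of `x`
  let c (x : ℕ → Bool) (i : ι) : C := p (List.ofFn fun k : Fin (e i) => x k, i)
  refine ⟨c, fun x i j hij => (Prod.ext_iff.1 (hp hij)).2, fun x i => hpL (_, i), fun x y hxy => ?_⟩
  obtain ⟨m, hm⟩ : ∃ m, x m ≠ y m := by simpa [funext_iff] using hxy
  refine ((finite_Iic m).preimage he.injOn |>.image (c x)).subset ?_
  rintro _ ⟨⟨i, rfl⟩, ⟨j, hji⟩⟩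
  obtain ⟨hpre, rfl⟩ := Prod.ext_iff.1 (hp hji)
  refine ⟨j, show e j ≤ m from not_lt.1 fun hmj => hm ?_, rfl⟩
  exact (congrFun (List.ofFn_inj.1 hpre) ⟨m, hmj⟩).symm

theorem exists_choice_forall_not_subset_range {ι κ C : Type*} [Countable ι] {L : ι → Set C}
    (hL : ∀ i, (L i).Infinite) {A : κ → Set C} (hA : ∀ j, (A j).Infinite) (hκ : #κ < 𝔠) :
    ∃ c : ι → C, Injective c ∧ (∀ i, c i ∈ L i) ∧ ∀ j, ¬ A j ⊆ range c := by
  obtain ⟨c, hinj, hmem, hdisj⟩ := exists_choices_pairwise_finite_inter_range hL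
  by_contra! h
  choose j hj using fun x => h (c x) (hinj x) (hmem x)
  have hj_inj : Injective j := fun x y hxy => by
    by_contra hne
    exact hA (j x) ((hdisj hne).subset (subset_inter (hj x) (hxy ▸ hj y)))
  exact hκ.not_ge (by simpa using lift_mk_le_lift_mk_of_injective hj_inj)

theorem listChromatic_le_of_listColorable {V : Type} {G : SimpleGraph V} {κ : Cardinal}
    (h : ListColorable G κ) : listChromatic G ≤ κ :=
  csInf_le' h

theorem lt_listChromatic_of_forall_not_listColorable {V : Type} {G : SimpleGraph V}
    {κ μ : Cardinal} (hκ : ListColorable G κ) (hμ : ∀ ν ≤ μ, ¬ ListColorable G ν) :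
    μ < listChromatic G :=
  lt_of_not_ge fun hle => hμ _ hle (csInf_mem (s := {ν | ListColorable G ν}) ⟨κ, hκ⟩)

theorem listColorable_completeBipartiteGraph {α β : Type} {κ : Cardinal} (hκ : #β < κ) :
    ListColorable (completeBipartiteGraph α β) κ := by
  intro C F hF
  have hne : ∀ v, (F v).Nonempty := fun v => by
    rw [← nonempty_coe_sort, ← mk_ne_zero_iff, hF]
    exact (zero_le.trans_lt hκ).ne'
  let r (b : β) : C := (hne (.inr b)).some
  have hfree : ∀ a, (F (.inl a) \ range r).Nonempty := fun a =>
    sdiff_nonempty.2 fun hsub => (mk_le_mk_of_subset hsub |>.trans mk_range_le).not_gt (hF _ ▸ hκ)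
  refine ⟨Sum.elim (fun a => (hfree a).some) r, ?_, ?_⟩
  · rintro (a | b) (a' | b') hadj heq <;> simp at hadj
    · exact (hfree a).some_mem.2 ⟨b', heq.symm⟩
    · exact (hfree a').some_mem.2 ⟨b, heq⟩
  · rintro (a | b)
    · exact (hfree a).some_mem.1
    · exact (hne (.inr b)).some_mem

theorem not_listColorable_completeBipartiteGraph_fun {α : Type} {κ : Cardinal} (hκ : κ ≤ #α) :
    ¬ ListColorable (completeBipartiteGraph α (α → α)) κ := by
  intro hlc
  obtain ⟨S, hS⟩ := le_mk_iff_exists_set.1 hκ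
  let F : α ⊕ (α → α) → Set (α × α) :=
    Sum.elim (fun a => (fun s => (a, s)) '' S) (fun g => (fun s => (s, g s)) '' S)
  have hF : ∀ v, #(F v) = κ := by
    rintro (a | g)
    · rw [← hS]
      exact mk_image_eq fun s t hst => (Prod.ext_iff.1 hst).2
    · rw [← hS]
      exact mk_image_eq fun s t hst => (Prod.ext_iff.1 hst).1
  obtain ⟨f, hgood, hmem⟩ := hlc _ F hF
  let g a := (f (.inl a)).2
  have hleft : ∀ a, f (.inl a) = (a, g a) := fun a => by
    obtain ⟨s, -, hs⟩ := hmem (.inl a)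
    simp [g, ← hs]
  obtain ⟨s, -, hs⟩ := hmem (.inr g)
  exact hgood (by simp) ((hleft s).trans hs)

theorem mk_lt_listChromatic_completeBipartiteGraph_fun (α : Type) :
    #α < listChromatic (completeBipartiteGraph α (α → α)) :=
  lt_listChromatic_of_forall_not_listColorable (listColorable_completeBipartiteGraph
    (Order.lt_succ _)) fun _ => not_listColorable_completeBipartiteGraph_fun

theorem listColorable_aleph0_of_isIndepSet_compl {V : Type} {G : SimpleGraph V} {S : Set V}
    (hS : S.Countable) (hSc : #(Sᶜ : Set V) < 𝔠) (hind : G.IsIndepSet Sᶜ) :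
    ListColorable G ℵ₀ := by
  classical
  intro C F hF
  have hinf : ∀ v, (F v).Infinite := fun v => by
    rw [← infinite_coe_iff, Cardinal.infinite_iff, hF]
  have := hS.to_subtype
  obtain ⟨c, hc, hcF, hcA⟩ := exists_choice_forall_not_subset_range (L := fun v : S => F v)
    (fun _ => hinf _) (A := fun v : ↥Sᶜ => F v) (fun _ => hinf _) hSc
  have hfree : ∀ v : ↥Sᶜ, (F v \ range c).Nonempty := fun v => sdiff_nonempty.2 (hcA v)
  refine ⟨fun v => if h : v ∈ S then c ⟨v, h⟩ else (hfree ⟨v, h⟩).some, fun u v huv => ?_,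
    fun v => ?_⟩
  · by_cases hu : u ∈ S <;> by_cases hv : v ∈ S <;> simp only [hu, hv, dite_true, dite_false]
    · exact hc.ne fun h => huv.ne (congrArg Subtype.val h)
    · exact fun h => (hfree ⟨v, hv⟩).some_mem.2 ⟨_, h⟩
    · exact fun h => (hfree ⟨u, hu⟩).some_mem.2 ⟨_, h.symm⟩
    · exact (hind hu hv huv.ne huv).elim
  · by_cases hv : v ∈ S <;> simp only [hv, dite_true, dite_false]
    · exact hcF ⟨v, hv⟩
    · exact (hfree ⟨v, hv⟩).some_mem.1

theorem listColorable_aleph0_of_subgraph_completeBipartiteGraph {α β : Type} [Countable α]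
    (H : (completeBipartiteGraph α β).Subgraph) (hH : #H.verts < 𝔠) : ListColorable H.coe ℵ₀ := by
  refine listColorable_aleph0_of_isIndepSet_compl (S := Subtype.val ⁻¹' range Sum.inl)
    ((countable_range _).preimage Subtype.val_injective) ((mk_set_le _).trans_lt hH) ?_
  rintro ⟨u | b, hu⟩ hu' ⟨v | b', hv⟩ hv' - huv <;> simp at hu' hv'
  simpa using H.adj_sub huv

/-- `Refl(List, 2^ω)` implies CH: if every graph of size `≤ 2^ω` with
uncountable list-chromatic number has a subgraph of size `ω₁` with uncountable
list-chromatic number, then `2^ω = ω₁`. -/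
theorem continuum_eq_aleph_one_of_refl_list
    (hrefl : ∀ (V : Type) (G : SimpleGraph V), #V ≤ 2 ^ ℵ₀ →
      ℵ₀ < listChromatic G →
      ∃ H : G.Subgraph, #H.verts = Cardinal.aleph 1 ∧ ℵ₀ < listChromatic H.coe) :
    2 ^ ℵ₀ = Cardinal.aleph 1 := by
  suffices h : (𝔠 : Cardinal.{0}) = ℵ₁ by simpa using congrArg lift h
  by_contra hCH
  have hV : #(ℕ ⊕ (ℕ → ℕ)) ≤ 2 ^ ℵ₀ := by simp
  obtain ⟨H, hcard, hlist⟩ :=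
    hrefl _ _ hV (mk_nat ▸ mk_lt_listChromatic_completeBipartiteGraph_fun ℕ)
  have hH : #H.verts < 𝔠 := hcard ▸ aleph_one_le_continuum.lt_of_ne' hCH
  exact hlist.not_ge (listChromatic_le_of_listColorable
    (listColorable_aleph0_of_subgraph_completeBipartiteGraph H hH))
end

section
/- Assume CH and fix a κ-nice graph X = (κ, E) and an ω-assignment F : κ → [κ]^ω. Let ℙ be the poset of countable good colorings p of induced subgraphs with ⟨X,F⟩-complete countable domain and p(α) ∈ F(α), ordered by reverse inclusion. Then: (a) if p, q ∈ ℙ and p ∪ q is a function, then p ∪ q ∈ ℙ and is the greatest lower bound of p and q; (b) ℙ satisfies the ω₂-chain condition. -/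
open Cardinal

/-- A set `x` of vertices is `⟨X,F⟩`-complete: it is closed under earlier
neighbors and lists, and contains every vertex with infinitely many neighbors
in `x`. -/
def XFComplete {V : Type} [LinearOrder V] (G : SimpleGraph V) (F : V → Set V)
    (x : Set V) : Prop :=
  (∀ a ∈ x, {b : V | G.Adj a b ∧ b < a} ⊆ x ∧ F a ⊆ x) ∧
  ∀ b : V, (x ∩ {c : V | G.Adj b c}).Infinite → b ∈ x

/-- The domain of a set of pairs, viewed as a partial function. -/
def pdom {V : Type} (p : Set (V × V)) : Set V := {a | ∃ b, (a, b) ∈ p}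

/-- Conditions of the poset `ℙ(X,F)`: countable good partial colorings (coded as
functional sets of pairs) with `⟨X,F⟩`-complete domain and values in the lists.
The order is reverse inclusion. -/
def IsCondition {V : Type} [LinearOrder V] (G : SimpleGraph V) (F : V → Set V)
    (p : Set (V × V)) : Prop :=
  (∀ a b b', (a, b) ∈ p → (a, b') ∈ p → b = b') ∧
  (pdom p).Countable ∧
  XFComplete G F (pdom p) ∧
  (∀ a b, (a, b) ∈ p → b ∈ F a) ∧
  (∀ a b a' b', (a, b) ∈ p → (a', b') ∈ p → G.Adj a a' → b ≠ b')

/-!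
For the chain condition, instead of a Δ-system we close under the operation sending a countable
set `c` to the domains of chosen members of `A`, one realising each of the at most `𝔠`
restrictions of members of `A` to `c`; iterating along `ω₁` gives a closed set `W` of size at
most `𝔠`. At most `𝔠` conditions have their domain inside `W`, so if `#A > 𝔠 = ℵ₁` some `q ∈ A`
has domain outside `W`. The member `p` chosen for the restriction of `q` to `W` then lies inside
`W`, so `p ≠ q`, and `p` agrees with `q` on their common domain, so `p ∪ q` is a common
extension by (a).
-/

open Set

universe u

section CountableClosure

variable {α : Type u}

lemma mk_countable_subsets_le_continuum {S : Set α} (hS : #S ≤ 𝔠) :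
    #{c : Set α // c ⊆ S ∧ c.Countable} ≤ 𝔠 := by
  simp only [← le_aleph0_iff_set_countable]
  calc #{c : Set α // c ⊆ S ∧ #c ≤ ℵ₀} ≤ max #S ℵ₀ ^ ℵ₀ := mk_bounded_subset_le S ℵ₀
    _ ≤ 𝔠 ^ ℵ₀ := power_le_power_right (max_le hS aleph0_le_continuum)
    _ = 𝔠 := continuum_power_aleph0

lemma mk_iUnion_le_continuum {ι : Type u} {f : ι → Set α} (hι : #ι ≤ 𝔠)
    (hf : ∀ i, #(f i) ≤ 𝔠) : #(⋃ i, f i) ≤ 𝔠 :=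
  (mk_iUnion_le f).trans <| (mul_le_mul' hι (ciSup_le' hf)).trans continuum_mul_self.le

lemma exists_lt_of_countable_aleph_one_toType (s : Set (ℵ₁ : Cardinal.{u}).ord.ToType)
    (hs : s.Countable) : ∃ i, ∀ j ∈ s, j < i := by
  have hcof : #s < Order.cof (ℵ₁ : Cardinal.{u}).ord.ToType := by
    rw [Ordinal.cof_toType, isRegular_aleph_one.cof_ord]
    exact (le_aleph0_iff_set_countable.mpr hs).trans_lt aleph0_lt_aleph_one
  exact not_isCofinal_iff.mp fun h => (Order.cof_le h).not_gt hcof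

variable (E : Set α → Set α)

def countableClosureStep (S : Set α) : Set α :=
  ⋃ c : {c : Set α // c ⊆ S ∧ c.Countable}, E c

def countableClosureStage (i : (ℵ₁ : Cardinal.{u}).ord.ToType) : Set α :=
  countableClosureStep E (⋃ j : Iio i, countableClosureStage j)
termination_by i
decreasing_by exact j.2

def countableClosure : Set α :=
  ⋃ i, countableClosureStage E i

variable {E}

lemma mk_countableClosureStage_le (hE : ∀ c : Set α, c.Countable → #(E c) ≤ 𝔠)
    (i : (ℵ₁ : Cardinal.{u}).ord.ToType) : #(countableClosureStage E i) ≤ 𝔠 := by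
  induction i using WellFoundedLT.induction with
  | ind i ih =>
    rw [countableClosureStage]
    refine mk_iUnion_le_continuum (mk_countable_subsets_le_continuum ?_) fun c => hE c c.2.2
    exact mk_iUnion_le_continuum
      ((mk_Iio_lt i (by simp)).le.trans (by simpa using aleph_one_le_continuum)) fun j => ih j j.2

lemma mk_countableClosure_le (hE : ∀ c : Set α, c.Countable → #(E c) ≤ 𝔠) :
    #(countableClosure E) ≤ 𝔠 := by
  refine mk_iUnion_le_continuum ?_ (mk_countableClosureStage_le hE)
  rw [mk_toType, card_ord]
  exact aleph_one_le_continuum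

lemma subset_countableClosure {c : Set α} (hc : c ⊆ countableClosure E)
    (hcc : c.Countable) : E c ⊆ countableClosure E := by
  choose stage hstage using fun x : c => mem_iUnion.mp (hc x.2)
  have : Countable c := hcc.to_subtype
  obtain ⟨i, hi⟩ := exists_lt_of_countable_aleph_one_toType _ (countable_range stage)
  have hci : c ⊆ ⋃ j : Iio i, countableClosureStage E j := fun x hx =>
    mem_iUnion.mpr ⟨⟨stage ⟨x, hx⟩, hi _ (mem_range_self _)⟩, hstage ⟨x, hx⟩⟩
  refine Subset.trans ?_ (subset_iUnion _ i)
  rw [countableClosureStage]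
  exact subset_iUnion_of_subset ⟨c, hci, hcc⟩ subset_rfl

end CountableClosure

section Restrictions

variable {α β : Type u} {F : α → Set β}

lemma mk_setOf_fst_mem_snd_mem_le {κ : Cardinal.{u}} (hF : ∀ a, (F a).Countable)
    {s : Set α} (hs : #s ≤ κ) (hκ : ℵ₀ ≤ κ) :
    #{x : α × β | x.1 ∈ s ∧ x.2 ∈ F x.1} ≤ κ := by
  have hunion : {x : α × β | x.1 ∈ s ∧ x.2 ∈ F x.1} = ⋃ a : s, {(a : α)} ×ˢ F a := by
    ext ⟨a, b⟩
    simp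
  rw [hunion]
  calc _ ≤ #s * ⨆ a : s, #({(a : α)} ×ˢ F a) := mk_iUnion_le _
    _ ≤ κ * κ := mul_le_mul' hs <| ciSup_le' fun a =>
        ((countable_singleton _).prod (hF a)).le_aleph0.trans hκ
    _ = κ := mul_eq_self hκ

lemma countable_of_countable_image_fst (hF : ∀ a, (F a).Countable) {p : Set (α × β)}
    (hp : (Prod.fst '' p).Countable) (hpF : ∀ x ∈ p, x.2 ∈ F x.1) : p.Countable := by
  refine le_aleph0_iff_set_countable.mp <| (mk_le_mk_of_subset fun x hx => ?_).trans
    (mk_setOf_fst_mem_snd_mem_le hF (le_aleph0_iff_set_countable.mpr hp) le_rfl)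
  exact ⟨mem_image_of_mem _ hx, hpF x hx⟩

variable {A : Set (Set (α × β))}

lemma exists_mk_le_continuum_forall_exists_restrict_eq (hF : ∀ a, (F a).Countable)
    (hdom : ∀ p ∈ A, (Prod.fst '' p).Countable) (hmem : ∀ p ∈ A, ∀ x ∈ p, x.2 ∈ F x.1)
    {c : Set α} (hc : c.Countable) :
    ∃ D : Set α, #D ≤ 𝔠 ∧ ∀ q ∈ A, ∃ p ∈ A,
      p ∩ Prod.fst ⁻¹' c = q ∩ Prod.fst ⁻¹' c ∧ Prod.fst '' p ⊆ D := by
  set restrictions := (· ∩ Prod.fst ⁻¹' c) '' A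
  have hrestrictions : #restrictions ≤ 𝔠 := by
    have hsub : restrictions ⊆ 𝒫 {x : α × β | x.1 ∈ c ∧ x.2 ∈ F x.1} := by
      rintro _ ⟨p, hp, rfl⟩ x ⟨hx, hxc⟩
      exact ⟨hxc, hmem p hp x hx⟩
    calc #restrictions ≤ 2 ^ #{x : α × β | x.1 ∈ c ∧ x.2 ∈ F x.1} :=
          (mk_le_mk_of_subset hsub).trans (mk_powerset _).le
      _ ≤ 2 ^ ℵ₀ := power_le_power_left two_ne_zero <|
          mk_setOf_fst_mem_snd_mem_le hF (le_aleph0_iff_set_countable.mpr hc) le_rfl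
      _ = 𝔠 := two_power_aleph0
  choose rep hrepA hrep using fun t : restrictions => t.2
  refine ⟨⋃ t, Prod.fst '' rep t, mk_iUnion_le_continuum hrestrictions fun t =>
    (le_aleph0_iff_set_countable.mpr (hdom _ (hrepA t))).trans aleph0_le_continuum, ?_⟩
  intro q hq
  let t : restrictions := ⟨_, mem_image_of_mem _ hq⟩
  exact ⟨rep t, hrepA t, hrep t, subset_iUnion (fun t => Prod.fst '' rep t) t⟩

theorem exists_ne_inter_preimage_image_fst_subset (hF : ∀ a, (F a).Countable)
    (hdom : ∀ p ∈ A, (Prod.fst '' p).Countable) (hmem : ∀ p ∈ A, ∀ x ∈ p, x.2 ∈ F x.1)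
    (hA : 𝔠 < #A) : ∃ p ∈ A, ∃ q ∈ A, p ≠ q ∧ p ∩ Prod.fst ⁻¹' (Prod.fst '' q) ⊆ q := by
  choose! E hE hErep using fun (c : Set α) (hc : c.Countable) =>
    exists_mk_le_continuum_forall_exists_restrict_eq hF hdom hmem hc
  set W := countableClosure E
  obtain ⟨q, hqA, hqW⟩ : ∃ q ∈ A, ¬Prod.fst '' q ⊆ W := by
    by_contra! h
    have hsub : A ⊆ {p | p ⊆ {x : α × β | x.1 ∈ W ∧ x.2 ∈ F x.1} ∧ p.Countable} :=
      fun p hp => ⟨fun x hx => ⟨h p hp (mem_image_of_mem _ hx), hmem p hp x hx⟩,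
        countable_of_countable_image_fst hF (hdom p hp) (hmem p hp)⟩
    exact hA.not_ge <| (mk_le_mk_of_subset hsub).trans <| mk_countable_subsets_le_continuum <|
      mk_setOf_fst_mem_snd_mem_le hF (mk_countableClosure_le hE) aleph0_le_continuum
  have hc : (Prod.fst '' q ∩ W).Countable := (hdom q hqA).mono inter_subset_left
  obtain ⟨p, hpA, hpq, hpE⟩ := hErep _ hc q hqA
  have hpW : Prod.fst '' p ⊆ W := hpE.trans (subset_countableClosure inter_subset_right hc)
  refine ⟨p, hpA, q, hqA, fun hpq => hqW (hpq ▸ hpW), fun x ⟨hxp, hxq⟩ => ?_⟩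
  have hx : x ∈ p ∩ Prod.fst ⁻¹' (Prod.fst '' q ∩ W) := ⟨hxp, hxq, hpW (mem_image_of_mem _ hxp)⟩
  exact (hpq ▸ hx).1

end Restrictions

lemma continuum_eq_aleph_one_of_two_power_aleph0.{v, w}
    (hCH : (2 : Cardinal.{w}) ^ ℵ₀ = ℵ₁) : (𝔠 : Cardinal.{v}) = ℵ₁ := by
  have hlift := congrArg lift.{v} hCH
  simp only [two_power_aleph0, lift_continuum, lift_aleph, Ordinal.lift_one] at hlift
  exact lift_inj.{v, w}.mp (by simpa only [lift_continuum, lift_aleph, Ordinal.lift_one])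

section Conditions

variable {V : Type}

lemma pdom_eq_image_fst (p : Set (V × V)) : pdom p = Prod.fst '' p := by
  ext a
  simp [pdom]

lemma pdom_union (p q : Set (V × V)) : pdom (p ∪ q) = pdom p ∪ pdom q := by
  ext a
  simp [pdom, exists_or]

variable [LinearOrder V] {G : SimpleGraph V} {F : V → Set V}

lemma XFComplete.union {x y : Set V} (hx : XFComplete G F x) (hy : XFComplete G F y) :
    XFComplete G F (x ∪ y) := by
  refine ⟨?_, fun b hb => ?_⟩
  · rintro a (ha | ha)
    · exact ⟨(hx.1 a ha).1.trans subset_union_left, (hx.1 a ha).2.trans subset_union_left⟩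
    · exact ⟨(hy.1 a ha).1.trans subset_union_right, (hy.1 a ha).2.trans subset_union_right⟩
  · rw [union_inter_distrib_right, infinite_union] at hb
    exact hb.imp (hx.2 b) (hy.2 b)

lemma IsCondition.union {p q : Set (V × V)} (hp : IsCondition G F p) (hq : IsCondition G F q)
    (hfun : ∀ a b b', (a, b) ∈ p ∪ q → (a, b') ∈ p ∪ q → b = b') :
    IsCondition G F (p ∪ q) := by
  obtain ⟨-, hpc, hpX, hpF, hpG⟩ := hp
  obtain ⟨-, hqc, hqX, hqF, hqG⟩ := hq
  -- the earlier endpoint of an edge between the two domains lies in both of them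
  have hcross : ∀ a b a' b', (a, b) ∈ p → (a', b') ∈ q → G.Adj a a' → b ≠ b' := by
    intro a b a' b' hab ha'b' hadj
    rcases hadj.ne'.lt_or_gt with hlt | hlt
    · obtain ⟨b'', hb''⟩ := (hpX.1 a ⟨b, hab⟩).1 ⟨hadj, hlt⟩
      rw [← hfun a' b'' b' (Or.inl hb'') (Or.inr ha'b')]
      exact hpG a b a' b'' hab hb'' hadj
    · obtain ⟨b'', hb''⟩ := (hqX.1 a' ⟨b', ha'b'⟩).1 ⟨hadj.symm, hlt⟩
      rw [← hfun a b'' b (Or.inr hb'') (Or.inl hab)]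
      exact hqG a b'' a' b' hb'' ha'b' hadj
  refine ⟨hfun, ?_, ?_, ?_, ?_⟩
  · rw [pdom_union]
    exact hpc.union hqc
  · rw [pdom_union]
    exact hpX.union hqX
  · rintro a b (h | h)
    exacts [hpF a b h, hqF a b h]
  · rintro a b a' b' (h | h) (h' | h') hadj
    · exact hpG a b a' b' h h' hadj
    · exact hcross a b a' b' h h' hadj
    · exact (hcross a' b' a b h' h hadj.symm).symm
    · exact hqG a b a' b' h h' hadj

lemma exists_ne_isCondition_union_of_continuum_lt (hF : ∀ a, (F a).Countable)
    {A : Set (Set (V × V))} (hA : ∀ p ∈ A, IsCondition G F p) (hcard : 𝔠 < #A) :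
    ∃ p ∈ A, ∃ q ∈ A, p ≠ q ∧ IsCondition G F (p ∪ q) := by
  obtain ⟨p, hpA, q, hqA, hne, hpq⟩ := exists_ne_inter_preimage_image_fst_subset hF
    (fun p hp => pdom_eq_image_fst p ▸ (hA p hp).2.1)
    (fun p hp x hx => (hA p hp).2.2.2.1 x.1 x.2 hx) hcard
  have hagree : ∀ a b b', (a, b) ∈ p → (a, b') ∈ q → b = b' := fun a b b' hb hb' =>
    (hA q hqA).1 a b b' (hpq ⟨hb, (a, b'), hb', rfl⟩) hb'
  refine ⟨p, hpA, q, hqA, hne, (hA p hpA).union (hA q hqA) ?_⟩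
  rintro a b b' (h | h) (h' | h')
  · exact (hA p hpA).1 a b b' h h'
  · exact hagree a b b' h h'
  · exact (hagree a b' b h' h).symm
  · exact (hA q hqA).1 a b b' h h'

end Conditions

theorem poset_glb_and_cc_general {V : Type} [LinearOrder V]
    (hCH : 2 ^ ℵ₀ = Cardinal.aleph 1)
    (G : SimpleGraph V)
    (F : V → Set V) (hF : ∀ a : V, (F a).Countable ∧ (F a).Infinite) :
    (∀ p q : Set (V × V), IsCondition G F p → IsCondition G F q →
      (∀ a b b', (a, b) ∈ p ∪ q → (a, b') ∈ p ∪ q → b = b') →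
      IsCondition G F (p ∪ q) ∧ p ⊆ p ∪ q ∧ q ⊆ p ∪ q ∧
        ∀ r : Set (V × V), IsCondition G F r → p ⊆ r → q ⊆ r → p ∪ q ⊆ r) ∧
    (∀ A : Set (Set (V × V)), (∀ p ∈ A, IsCondition G F p) →
      (∀ p ∈ A, ∀ q ∈ A, p ≠ q → ¬∃ r, IsCondition G F r ∧ p ⊆ r ∧ q ⊆ r) →
      #A ≤ Cardinal.aleph 1) := by
  refine ⟨fun p q hp hq hfun => ⟨hp.union hq hfun, subset_union_left, subset_union_right,
    fun _ _ => union_subset⟩, fun A hA hAC => ?_⟩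
  by_contra! hA1
  rw [← continuum_eq_aleph_one_of_two_power_aleph0 hCH] at hA1
  obtain ⟨p, hpA, q, hqA, hne, hpq⟩ :=
    exists_ne_isCondition_union_of_continuum_lt (fun a => (hF a).1) hA hA1
  exact hAC p hpA q hqA hne ⟨p ∪ q, hpq, subset_union_left, subset_union_right⟩

/-- Assume CH, `X` a `κ`-nice graph, `F` an `ω`-assignment, and `ℙ = ℙ(X,F)`
the poset of countable good colorings with complete domains, ordered by reverse
inclusion.  Then: (a) if `p ∪ q` is a function then it is a condition and is the
greatest lower bound of `p` and `q`; (b) `ℙ` satisfies the `ω₂`-c.c. -/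
theorem poset_glb_and_cc {V : Type} [LinearOrder V] [WellFoundedLT V]
    (κ : Cardinal) (hκ : Cardinal.aleph 2 ≤ κ) (hCH : 2 ^ ℵ₀ = Cardinal.aleph 1)
    (hcard : #V = κ) (hseg : ∀ a : V, #{b : V | b < a} < κ)
    (G : SimpleGraph V)
    (hnice1 : colNum G ≤ Cardinal.aleph 1)
    (hnice2 : ∀ H : G.Subgraph, #H.verts = Cardinal.aleph 1 → colNum H.coe ≤ ℵ₀)
    (hnice3 : ∀ a : V, #{b : V | G.Adj a b ∧ b < a} ≤ ℵ₀)
    (F : V → Set V) (hF : ∀ a : V, (F a).Countable ∧ (F a).Infinite) :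
    (∀ p q : Set (V × V), IsCondition G F p → IsCondition G F q →
      (∀ a b b', (a, b) ∈ p ∪ q → (a, b') ∈ p ∪ q → b = b') →
      IsCondition G F (p ∪ q) ∧ p ⊆ p ∪ q ∧ q ⊆ p ∪ q ∧
        ∀ r : Set (V × V), IsCondition G F r → p ⊆ r → q ⊆ r → p ∪ q ⊆ r) ∧
    (∀ A : Set (Set (V × V)), (∀ p ∈ A, IsCondition G F p) →
      (∀ p ∈ A, ∀ q ∈ A, p ≠ q → ¬∃ r, IsCondition G F r ∧ p ⊆ r ∧ q ⊆ r) →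
      #A ≤ Cardinal.aleph 1) :=
  poset_glb_and_cc_general hCH G F hF
end

section
/- Assume CH and let ℙ = ℙ(X, F) be the poset of countable good partial colorings of a κ-nice graph X with complete countable domains and values in the lists F(α). For every p ∈ ℙ and every countable ⟨X,F⟩-complete set x ⊇ dom(p), there is q ∈ ℙ with q ≤ p and dom(q) = x. -/
/-!
The new vertices `x \ dom p` are countably many, so they can be colored greedily along an
enumeration of type `ω`. When a new vertex `v` is reached only finitely many colors are
excluded: those of its finitely many earlier new neighbours, and those of its neighbours in
`dom p`, of which there are finitely many because `dom p` is complete and does not contain `v`.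
Since `F v` is infinite, an admissible color remains.
-/

open Cardinal

theorem exists_goodColoring_of_infinite_lists {W C : Type} [Countable W] (G : SimpleGraph W)
    (L : W → Set C) (hL : ∀ w, (L w).Infinite) :
    ∃ g : W → C, IsGoodColoring G g ∧ ∀ w, g w ∈ L w := by
  obtain ⟨ι, hι⟩ := Countable.exists_injective_nat W
  have hpred : ∀ w, {u | ι u < ι w}.Finite := fun w =>
    (Set.finite_Iio (ι w)).preimage hι.injOn
  have hfree : ∀ w (s : Set C), s.Finite → ∃ c ∈ L w, c ∉ s :=
    fun w s hs => ((hL w).sdiff hs).nonempty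
  choose pick hpick_mem hpick_not_mem using hfree
  let earlier (w : W) (col : ∀ u, ι u < ι w → C) : Set C :=
    Set.range fun u : {u | ι u < ι w} => col u u.2
  have earlier_finite : ∀ w col, (earlier w col).Finite := fun w col =>
    haveI := (hpred w).to_subtype; Set.finite_range _
  let g : W → C := (InvImage.wf ι wellFounded_lt).fix fun w col =>
    pick w (earlier w col) (earlier_finite w col)
  have hg : ∀ w, g w = pick w (earlier w fun u _ => g u) (earlier_finite w fun u _ => g u) :=
    fun w => WellFounded.fix_eq _ _ w
  have hg_new : ∀ w, g w ∉ earlier w fun u _ => g u := fun w => hg w ▸ hpick_not_mem _ _ _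
  refine ⟨g, fun x y hxy hxy_eq => ?_, fun w => hg w ▸ hpick_mem _ _ _⟩
  rcases lt_or_gt_of_ne (hι.ne (G.ne_of_adj hxy)) with h | h
  · exact hg_new y ⟨⟨x, h⟩, hxy_eq⟩
  · exact hg_new x ⟨⟨y, h⟩, hxy_eq.symm⟩

theorem isGoodColoring_glue {V C : Type} {G : SimpleGraph V} {D S : Set V}
    [DecidablePred (· ∈ S)] {f : V → C} (hf : IsGoodColoring (G.induce D) (D.domRestrict f))
    {g : S → C} (hg : IsGoodColoring (G.induce S) g)
    (hgf : ∀ v : S, g v ∉ f '' (D ∩ G.neighborSet v)) :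
    IsGoodColoring (G.induce (D ∪ S))
      ((D ∪ S).domRestrict fun a => if ha : a ∈ S then g ⟨a, ha⟩ else f a) := by
  rintro ⟨a, ha⟩ ⟨a', ha'⟩ hadj
  simp only [Set.domRestrict_apply]
  by_cases haS : a ∈ S <;> by_cases ha'S : a' ∈ S <;>
    simp only [haS, ha'S, dite_true, dite_false]
  · exact hg (x := ⟨a, haS⟩) (y := ⟨a', ha'S⟩) hadj
  · exact fun h => hgf ⟨a, haS⟩ ⟨a', ⟨ha'.resolve_right ha'S, hadj⟩, h.symm⟩
  · exact fun h => hgf ⟨a', ha'S⟩ ⟨a, ⟨ha.resolve_right haS, hadj.symm⟩, h⟩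
  · exact hf (x := ⟨a, ha.resolve_right haS⟩) (y := ⟨a', ha'.resolve_right ha'S⟩) hadj

theorem exists_apply_eq_of_functional {V : Type} {p : Set (V × V)}
    (hfun : ∀ a b b', (a, b) ∈ p → (a, b') ∈ p → b = b') :
    ∃ f : V → V, ∀ a b, (a, b) ∈ p → f a = b := by
  classical
  refine ⟨fun a => if h : ∃ b, (a, b) ∈ p then h.choose else a, fun a b hab => ?_⟩
  have h : ∃ b, (a, b) ∈ p := ⟨b, hab⟩
  simp only [dif_pos h]
  exact hfun _ _ _ h.choose_spec hab

theorem XFComplete.finite_inter_neighborSet {V : Type} [LinearOrder V] {G : SimpleGraph V}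
    {F : V → Set V} {x : Set V} (hx : XFComplete G F x) {b : V} (hb : b ∉ x) :
    (x ∩ G.neighborSet b).Finite :=
  Set.not_infinite.1 fun h => hb (hx.2 b h)

theorem pdom_graphOn {V : Type} (h : V → V) (x : Set V) : pdom (x.graphOn h) = x := by
  ext a
  simp [pdom]

theorem isCondition_graphOn {V : Type} [LinearOrder V] {G : SimpleGraph V} {F : V → Set V}
    {h : V → V} {x : Set V} (hx : x.Countable) (hxc : XFComplete G F x)
    (hF : ∀ a ∈ x, h a ∈ F a) (hgood : IsGoodColoring (G.induce x) (x.domRestrict h)) :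
    IsCondition G F (x.graphOn h) := by
  refine ⟨?_, by rwa [pdom_graphOn], by rwa [pdom_graphOn], ?_, ?_⟩
  · intro a b b' hb hb'
    simp only [Set.mem_graphOn] at hb hb'
    exact hb.2.symm.trans hb'.2
  · intro a b hb
    simp only [Set.mem_graphOn] at hb
    exact hb.2 ▸ hF a hb.1
  · intro a b a' b' hb hb' hadj
    simp only [Set.mem_graphOn] at hb hb'
    rw [← hb.2, ← hb'.2]
    exact hgood (x := ⟨a, hb.1⟩) (y := ⟨a', hb'.1⟩) hadj

theorem condition_extension_general {V : Type} [LinearOrder V]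
    (G : SimpleGraph V)
    (F : V → Set V) (hF : ∀ a : V, (F a).Countable ∧ (F a).Infinite) :
    ∀ p : Set (V × V), IsCondition G F p →
      ∀ x : Set V, x.Countable → XFComplete G F x → pdom p ⊆ x →
        ∃ q : Set (V × V), IsCondition G F q ∧ p ⊆ q ∧ pdom q = x := by
  classical
  intro p hp x hx hxc hpx
  obtain ⟨hfun, -, hpc, hpF, hpgood⟩ := hp
  obtain ⟨f, hf⟩ := exists_apply_eq_of_functional hfun
  have hf_mem : ∀ a ∈ pdom p, (a, f a) ∈ p := fun a ⟨b, hb⟩ => hf a b hb ▸ hb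
  set S := x \ pdom p
  have : Countable S := (hx.mono Set.sdiff_subset).to_subtype
  have hL : ∀ v : S, (F v \ f '' (pdom p ∩ G.neighborSet v)).Infinite := fun v =>
    (hF v).2.sdiff ((hpc.finite_inter_neighborSet v.2.2).image f)
  obtain ⟨g, hg, hgF⟩ := exists_goodColoring_of_infinite_lists (G.induce S) _ hL
  have hf_good : IsGoodColoring (G.induce (pdom p)) ((pdom p).domRestrict f) :=
    fun a a' hadj => hpgood _ _ _ _ (hf_mem _ a.2) (hf_mem _ a'.2) hadj
  have h_good := isGoodColoring_glue hf_good hg fun v => (hgF v).2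
  rw [Set.union_sdiff_cancel hpx] at h_good
  refine ⟨_, isCondition_graphOn hx hxc (fun a ha => ?_) h_good, ?_, pdom_graphOn _ x⟩
  · by_cases haS : a ∈ S
    · simpa [haS] using (hgF ⟨a, haS⟩).1
    · have ha_old : a ∈ pdom p := not_not.1 fun h => haS ⟨ha, h⟩
      simpa [haS] using hpF _ _ (hf_mem a ha_old)
  · rintro ⟨a, b⟩ hab
    have ha : a ∈ pdom p := ⟨b, hab⟩
    exact Set.mem_graphOn.2 ⟨hpx ha, by simp [S, ha, hf a b hab]⟩

/-- Assume CH, `X` a `κ`-nice graph, `F` an `ω`-assignment, and `ℙ = ℙ(X,F)` as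
above.  For every condition `p` and every countable `⟨X,F⟩`-complete set
`x ⊇ dom(p)`, there is a condition `q ≤ p` with `dom(q) = x`. -/
theorem condition_extension {V : Type} [LinearOrder V] [WellFoundedLT V]
    (κ : Cardinal) (hκ : Cardinal.aleph 2 ≤ κ) (hCH : 2 ^ ℵ₀ = Cardinal.aleph 1)
    (hcard : #V = κ) (hseg : ∀ a : V, #{b : V | b < a} < κ)
    (G : SimpleGraph V)
    (hnice1 : colNum G ≤ Cardinal.aleph 1)
    (hnice2 : ∀ H : G.Subgraph, #H.verts = Cardinal.aleph 1 → colNum H.coe ≤ ℵ₀)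
    (hnice3 : ∀ a : V, #{b : V | G.Adj a b ∧ b < a} ≤ ℵ₀)
    (F : V → Set V) (hF : ∀ a : V, (F a).Countable ∧ (F a).Infinite) :
    ∀ p : Set (V × V), IsCondition G F p →
      ∀ x : Set V, x.Countable → XFComplete G F x → pdom p ⊆ x →
        ∃ q : Set (V × V), IsCondition G F q ∧ p ⊆ q ∧ pdom q = x :=
  condition_extension_general G F hF
end
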